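/- arXiv:2204.05020 — 5 statements merged into one kernel-verified Lean document; each statement's English description precedes it below -/
import Mathlib

section
/- The functions L and F are infinitely differentiable on the interval (M, +∞), and for every λ > M one has L′(λ) = λ·F′(λ). -/
open MeasureTheory Filter Set Topology Metric

-- periodic + bound on a period implies global bound
lemma per_le {f : ℝ → ℝ} {T M : ℝ} (hT : 0 < T) (hf : Function.Periodic f T)
    (hM : ∀ y ∈ Set.Icc 0 T, f y ≤ M) : ∀ x, f x ≤ M := by
  intro x
  obtain ⟨y, hy, hxy⟩ := hf.exists_mem_Ico₀ hT x
  rw [hxy]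
  exact hM y ⟨hy.1, hy.2.le⟩

lemma per_bdd {f : ℝ → ℝ} {T : ℝ} (hT : 0 < T) (hf : Function.Periodic f T)
    (hc : Continuous f) : ∃ B : ℝ, ∀ x, |f x| ≤ B := by
  obtain ⟨B, hB⟩ := (isCompact_Icc (a := (0:ℝ)) (b := T)).exists_bound_of_continuousOn
    hc.continuousOn
  refine ⟨B, fun x => ?_⟩
  obtain ⟨y, hy, hxy⟩ := hf.exists_mem_Ico₀ hT x
  rw [hxy]
  exact hB y ⟨hy.1, hy.2.le⟩

lemma intInt {E : Type*} [NormedAddCommGroup E] {φ : ℝ → E} {a b B : ℝ}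
    (hφ : AEStronglyMeasurable φ (volume.restrict (Set.uIoc a b)))
    (hB : ∀ θ, ‖φ θ‖ ≤ B) : IntervalIntegrable φ volume a b := by
  rw [intervalIntegrable_iff]
  refine Integrable.mono' (g := fun _ => B) ?_ hφ (Filter.Eventually.of_forall hB)
  exact integrableOn_const measure_Ioc_lt_top.ne

lemma lipDiv {C Sg : ℝ → ℝ} {KC KS : NNReal} (hC : LipschitzWith KC C)
    (hSg : LipschitzWith KS Sg) {l δ B : ℝ} (hδ : 0 < δ)
    (hlow : ∀ θ, δ ≤ l - C θ) (hB : ∀ θ, |Sg θ| ≤ B) :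
    ∃ K : NNReal, LipschitzWith K (fun θ => Sg θ / (l - C θ)) := by
  have hB0 : 0 ≤ B := le_trans (abs_nonneg _) (hB 0)
  refine ⟨Real.nnabs (KS / δ + B * KC / δ ^ 2), LipschitzWith.of_dist_le_mul fun a b => ?_⟩
  have hda := hlow a
  have hdb := hlow b
  have hda0 : (0:ℝ) < l - C a := lt_of_lt_of_le hδ hda
  have hdb0 : (0:ℝ) < l - C b := lt_of_lt_of_le hδ hdb
  have halg : Sg a / (l - C a) - Sg b / (l - C b)
      = (Sg a - Sg b) / (l - C a) + Sg b * (C a - C b) / ((l - C a) * (l - C b)) := by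
    field_simp
    ring
  have hS : |Sg a - Sg b| ≤ KS * |a - b| := by
    simpa [Real.dist_eq] using hSg.dist_le_mul a b
  have hCl : |C a - C b| ≤ KC * |a - b| := by
    simpa [Real.dist_eq] using hC.dist_le_mul a b
  rw [Real.dist_eq, Real.dist_eq, halg]
  have h1 : |(Sg a - Sg b) / (l - C a)| ≤ KS * |a - b| / δ := by
    rw [abs_div, abs_of_pos hda0]
    exact div_le_div₀ (by positivity) hS hδ hda
  have h2 : |Sg b * (C a - C b) / ((l - C a) * (l - C b))|
      ≤ B * (KC * |a - b|) / (δ * δ) := by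
    rw [abs_div, abs_mul, abs_of_pos (mul_pos hda0 hdb0)]
    refine div_le_div₀ (by positivity) ?_ (by positivity) ?_
    · exact mul_le_mul (hB b) hCl (abs_nonneg _) hB0
    · exact mul_le_mul hda hdb hδ.le hda0.le
  calc |(Sg a - Sg b) / (l - C a) + Sg b * (C a - C b) / ((l - C a) * (l - C b))|
      ≤ |(Sg a - Sg b) / (l - C a)| + |Sg b * (C a - C b) / ((l - C a) * (l - C b))| :=
        abs_add_le _ _
    _ ≤ KS * |a - b| / δ + B * (KC * |a - b|) / (δ * δ) := add_le_add h1 h2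
    _ = (KS / δ + B * KC / δ ^ 2) * |a - b| := by ring
    _ ≤ ↑(Real.nnabs (KS / δ + B * KC / δ ^ 2)) * |a - b| := by
        refine mul_le_mul_of_nonneg_right ?_ (abs_nonneg _)
        rw [Real.coe_nnabs]; exact le_abs_self _

lemma cxInt (f : ℝ → ℝ) (a b : ℝ) :
    (∫ x in a..b, (f x : ℂ)) = ((∫ x in a..b, f x : ℝ) : ℂ) :=
  RCLike.intervalIntegral_ofReal

lemma keyDeriv (S : ℝ) (C : ℝ → ℝ) (hCc : Continuous C) (M : ℝ) (hCM : ∀ θ, C θ ≤ M)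
    (f : ℝ → ℝ) (hf : Measurable f) (B : ℝ) (hB : ∀ θ, |f θ| ≤ B)
    (z₀ : ℂ) (hz : M < z₀.re) :
    HasDerivAt (fun z : ℂ => ∫ θ in (0:ℝ)..(2*S), (f θ : ℂ) / (z - C θ))
      (∫ θ in (0:ℝ)..(2*S), -((f θ : ℂ) / (z₀ - C θ)^2)) z₀ := by
  have hB0 : 0 ≤ B := le_trans (abs_nonneg _) (hB 0)
  set ε : ℝ := (z₀.re - M) / 2 with hε
  have hε0 : 0 < ε := by simp [hε]; linarith
  have hlow : ∀ θ : ℝ, ∀ z ∈ ball z₀ ε, ε ≤ ‖z - (C θ : ℂ)‖ := by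
    intro θ z hzb
    have h1 : (z - (C θ : ℂ)).re ≤ ‖z - (C θ : ℂ)‖ := Complex.re_le_norm _
    have h2 : |z.re - z₀.re| ≤ ‖z - z₀‖ := by
      simpa using Complex.abs_re_le_norm (z - z₀)
    have h3 : ‖z - z₀‖ < ε := by simpa [dist_eq_norm] using hzb
    have h4 : (z - (C θ : ℂ)).re = z.re - C θ := by simp
    have := hCM θ
    have h5 : |z.re - z₀.re| < ε := lt_of_le_of_lt h2 h3
    rw [h4] at h1
    have : z₀.re - ε - M ≤ z.re - C θ := by
      rcases abs_lt.1 h5 with ⟨h6, _⟩; linarith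
    calc ε = z₀.re - ε - M := by rw [hε]; ring
    _ ≤ z.re - C θ := this
    _ ≤ ‖z - (C θ : ℂ)‖ := h1
  have hne : ∀ θ : ℝ, ∀ z ∈ ball z₀ ε, z - (C θ : ℂ) ≠ 0 := by
    intro θ z hzb h0
    have := hlow θ z hzb
    rw [h0] at this; simp at this; linarith
  have hz₀b : z₀ ∈ ball z₀ ε := mem_ball_self hε0
  have hmeas : ∀ z : ℂ, AEStronglyMeasurable (fun θ => (f θ : ℂ) / (z - C θ))
      (volume.restrict (Set.uIoc (0:ℝ) (2*S))) := by
    intro z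
    exact ((Complex.measurable_ofReal.comp hf).div
      ((Complex.measurable_ofReal.comp hCc.measurable).const_sub z)).aestronglyMeasurable
  have key := intervalIntegral.hasDerivAt_integral_of_dominated_loc_of_lip
    (F := fun z θ => (f θ : ℂ) / (z - C θ))
    (F' := fun θ => -((f θ : ℂ) / (z₀ - C θ)^2))
    (bound := fun _ => B / ε ^ 2)
    (a := 0) (b := 2*S) (μ := volume) (x₀ := z₀) (ball_mem_nhds z₀ hε0)
    (Filter.Eventually.of_forall hmeas)
    ?hint ?h'meas ?hlip ?bint ?hdiff
  · exact key.2
  case hint =>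
    refine intInt (hmeas z₀) (B := B / ε) (fun θ => ?_)
    rw [norm_div, Complex.norm_real]
    exact div_le_div₀ (by positivity) (hB θ) hε0 (hlow θ z₀ hz₀b)
  case h'meas =>
    exact (((Complex.measurable_ofReal.comp hf).div
      (((Complex.measurable_ofReal.comp hCc.measurable).const_sub z₀).pow_const 2)).neg).aestronglyMeasurable
  case bint => exact intervalIntegrable_const
  case hlip =>
    refine Filter.Eventually.of_forall (fun θ _ => ?_)
    refine LipschitzOnWith.of_dist_le_mul (fun x hx y hy => ?_)
    have hx0 := hne θ x hx
    have hy0 := hne θ y hy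
    have halg : (f θ : ℂ) / (x - C θ) - (f θ : ℂ) / (y - C θ)
        = (f θ : ℂ) * (y - x) / ((x - C θ) * (y - C θ)) := by
      field_simp
      ring
    rw [dist_eq_norm, halg, dist_eq_norm]
    rw [norm_div, norm_mul, Complex.norm_real]
    have hd : ε * ε ≤ ‖(x - (C θ : ℂ)) * (y - (C θ : ℂ))‖ := by
      rw [norm_mul]
      exact mul_le_mul (hlow θ x hx) (hlow θ y hy) hε0.le
        (le_trans hε0.le (hlow θ x hx))
    have hnum : |f θ| * ‖(y : ℂ) - x‖ ≤ B * ‖x - y‖ := by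
      rw [show ‖(y:ℂ) - x‖ = ‖x - y‖ from norm_sub_rev _ _]
      exact mul_le_mul_of_nonneg_right (hB θ) (norm_nonneg _)
    calc |f θ| * ‖(y:ℂ) - x‖ / ‖(x - (C θ:ℂ)) * (y - (C θ:ℂ))‖
        ≤ B * ‖x - y‖ / (ε * ε) :=
          div_le_div₀ (by positivity) hnum (by positivity) hd
      _ = B / ε ^2 * ‖x - y‖ := by ring
      _ ≤ ↑(Real.nnabs (B / ε ^ 2)) * ‖x - y‖ := by
          refine mul_le_mul_of_nonneg_right ?_ (norm_nonneg _)
          rw [Real.coe_nnabs]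
          exact le_abs_self _
  case hdiff =>
    refine Filter.Eventually.of_forall (fun θ _ => ?_)
    have h0 : z₀ - (C θ : ℂ) ≠ 0 := hne θ z₀ hz₀b
    have h1 : HasDerivAt (fun z : ℂ => (z - (C θ : ℂ))⁻¹)
        (-1 / (z₀ - (C θ : ℂ)) ^ 2) z₀ := by
      exact ((hasDerivAt_id z₀).sub_const (C θ : ℂ)).inv h0
    have h2 := h1.const_mul (f θ : ℂ)
    have heq : (fun z : ℂ => (f θ : ℂ) * (z - (C θ:ℂ))⁻¹)
        = fun z : ℂ => (f θ : ℂ) / (z - C θ) := by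
      funext z; rw [div_eq_mul_inv]
    rw [heq] at h2
    exact h2.congr_deriv (by ring)
lemma claimA (S : ℝ) (C Sg c s : ℝ → ℝ)
    (hC_lip : ∃ K : NNReal, LipschitzWith K C)
    (hSg_lip : ∃ K : NNReal, LipschitzWith K Sg)
    (hC_per : Function.Periodic C (2 * S)) (hSg_per : Function.Periodic Sg (2 * S))
    (hc_meas : Measurable c) (hs_meas : Measurable s)
    (hconv : ∀ᵐ θ ∂(volume : Measure ℝ), HasDerivAt C (-(s θ)) θ ∧ HasDerivAt Sg (c θ) θ)
    (M l : ℝ) (hCM : ∀ θ, C θ ≤ M) (hl : M < l)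
    (hSgB : ∃ B : ℝ, ∀ θ, |Sg θ| ≤ B) :
    ∫ θ in (0:ℝ)..(2*S), (c θ / (l - C θ) - s θ * Sg θ / (l - C θ)^2) = 0 := by
  obtain ⟨KC, hKC⟩ := hC_lip
  obtain ⟨KS, hKS⟩ := hSg_lip
  obtain ⟨B, hB⟩ := hSgB
  set δ : ℝ := l - M with hδdef
  have hδ : 0 < δ := by simp [hδdef]; linarith
  have hlow : ∀ θ, δ ≤ l - C θ := fun θ => by have := hCM θ; simp [hδdef]; linarith
  have hne : ∀ θ, l - C θ ≠ 0 := fun θ => ne_of_gt (lt_of_lt_of_le hδ (hlow θ))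
  set g : ℝ → ℝ := fun θ => Sg θ / (l - C θ) with hgdef
  obtain ⟨K, hK⟩ := lipDiv hKC hKS hδ hlow hB
  have hgper : Function.Periodic g (2 * S) := fun θ => by
    simp only [hgdef, hC_per θ, hSg_per θ]
  set g' : ℝ → ℝ := fun θ => c θ / (l - C θ) - s θ * Sg θ / (l - C θ)^2 with hg'def
  -- the shifted integral is constant in t
  have hconst : ∀ t : ℝ, (∫ θ in (0:ℝ)..(2*S), g (θ + t)) = ∫ θ in (0:ℝ)..(2*S), g θ := by
    intro t
    rw [intervalIntegral.integral_comp_add_right]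
    have := hgper.intervalIntegral_add_eq (0 + t) 0
    simpa [zero_add, add_comm] using this
  -- derivative of the shifted integral at 0
  have hder : HasDerivAt (fun t : ℝ => ∫ θ in (0:ℝ)..(2*S), g (θ + t))
      (∫ θ in (0:ℝ)..(2*S), g' θ) 0 := by
    have hgc : Continuous g := hK.continuous
    have key := intervalIntegral.hasDerivAt_integral_of_dominated_loc_of_lip
      (F := fun t θ => g (θ + t)) (F' := g') (bound := fun _ => (K : ℝ))
      (a := 0) (b := 2*S) (μ := volume) (x₀ := (0:ℝ)) (ball_mem_nhds (0:ℝ) one_pos)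
      (Filter.Eventually.of_forall (fun t =>
        (hgc.comp (continuous_id.add continuous_const)).aestronglyMeasurable))
      ((hgc.comp (continuous_id.add continuous_const)).intervalIntegrable _ _)
      ?h'meas ?hlip intervalIntegrable_const ?hdiff
    · exact key.2
    case h'meas =>
      refine Measurable.aestronglyMeasurable ?_
      exact (hc_meas.div ((measurable_const.sub hKC.continuous.measurable))).sub
        ((hs_meas.mul hKS.continuous.measurable).div
          ((measurable_const.sub hKC.continuous.measurable).pow_const 2))
    case hlip =>
      refine Filter.Eventually.of_forall (fun θ _ => ?_)
      have h1 : LipschitzWith 1 (fun t : ℝ => θ + t) := by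
        refine LipschitzWith.of_dist_le_mul (fun x y => ?_)
        simp [Real.dist_eq]
      refine LipschitzOnWith.of_dist_le_mul (fun x _ y _ => ?_)
      have h3 := hK.dist_le_mul (θ + x) (θ + y)
      rw [dist_add_left] at h3
      refine le_trans h3 (mul_le_mul_of_nonneg_right ?_ dist_nonneg)
      rw [Real.coe_nnabs]
      exact le_abs_self _
    case hdiff =>
      refine hconv.mono (fun θ hθ _ => ?_)
      obtain ⟨hCd, hSgd⟩ := hθ
      have hgd : HasDerivAt g (g' θ) θ := by
        have h0 : l - C θ ≠ 0 := hne θ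
        have := hSgd.div ((hasDerivAt_const θ l).sub hCd) h0
        refine this.congr_deriv (Eq.symm ?_)
        have hnum : c θ * (l - C θ) - Sg θ * (0 - -s θ)
            = c θ * (l - C θ) - s θ * Sg θ := by ring
        show c θ / (l - C θ) - s θ * Sg θ / (l - C θ)^2 = (c θ * (l - C θ) - Sg θ * (0 - -s θ)) / (l - C θ)^2
        rw [hnum, sub_div]
        congr 1
        rw [pow_two, mul_div_mul_right _ _ h0]
      have hadd : HasDerivAt (fun t : ℝ => θ + t) 1 0 := by
        simpa using (hasDerivAt_id (0:ℝ)).const_add θ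
      have hgd' : HasDerivAt g (g' θ) (θ + 0) := by rwa [add_zero]
      have := HasDerivAt.comp (0:ℝ) hgd' hadd
      exact this.congr_deriv (mul_one _)
  -- the shifted integral is constant, hence derivative is 0
  have hder0 : HasDerivAt (fun t : ℝ => ∫ θ in (0:ℝ)..(2*S), g (θ + t))
      ((0:ℝ)) 0 := by
    have : (fun t : ℝ => ∫ θ in (0:ℝ)..(2*S), g (θ + t))
        = fun _ => ∫ θ in (0:ℝ)..(2*S), g θ := funext hconst
    rw [this]
    exact hasDerivAt_const _ _
  exact (hder.unique hder0)

theorem stmt0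
    (S : ℝ) (hS : 0 < S)
    (C Sg c s : ℝ → ℝ)
    (hC_lip : ∃ K : NNReal, LipschitzWith K C)
    (hSg_lip : ∃ K : NNReal, LipschitzWith K Sg)
    (hC_per : Function.Periodic C (2 * S))
    (hSg_per : Function.Periodic Sg (2 * S))
    (hc_meas : Measurable c) (hs_meas : Measurable s)
    (hc_bdd : ∃ B : ℝ, ∀ θ, |c θ| ≤ B) (hs_bdd : ∃ B : ℝ, ∀ θ, |s θ| ≤ B)
    (hconv : ∀ᵐ θ ∂(volume : Measure ℝ), HasDerivAt C (-(s θ)) θ ∧ HasDerivAt Sg (c θ) θ ∧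
      c θ * C θ + s θ * Sg θ = 1)
    (M : ℝ) (hM : IsGreatest (C '' Set.Icc 0 (2 * S)) M)
    (L F : ℝ → ℝ)
    (hL : ∀ l : ℝ, M < l → L l = ∫ θ in (0:ℝ)..(2*S), 1 / (l - C θ))
    (hF : ∀ l : ℝ, M < l → F l = ∫ θ in (0:ℝ)..(2*S), c θ / (l - C θ)) :
    ContDiffOn ℝ (⊤ : ℕ∞) L (Set.Ioi M) ∧ ContDiffOn ℝ (⊤ : ℕ∞) F (Set.Ioi M) ∧
      ∀ l : ℝ, M < l → deriv L l = l * deriv F l := by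
  obtain ⟨KC, hKC⟩ := hC_lip
  obtain ⟨KS, hKS⟩ := hSg_lip
  obtain ⟨Bc, hBc⟩ := hc_bdd
  have hT : (0:ℝ) < 2 * S := by linarith
  have hCc : Continuous C := hKC.continuous
  have hCM : ∀ θ, C θ ≤ M := per_le hT hC_per (fun y hy => hM.2 ⟨y, hy, rfl⟩)
  obtain ⟨BS, hBS⟩ := per_bdd hT hSg_per hKS.continuous
  -- the main analyticity/derivative machine, for a general bounded measurable f
  have main : ∀ f : ℝ → ℝ, Measurable f → ∀ Bf : ℝ, (∀ θ, |f θ| ≤ Bf) →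
      ContDiffOn ℝ (⊤ : ℕ∞) (fun x : ℝ => ∫ θ in (0:ℝ)..(2*S), f θ / (x - C θ)) (Set.Ioi M) ∧
      ∀ l : ℝ, M < l → HasDerivAt (fun x : ℝ => ∫ θ in (0:ℝ)..(2*S), f θ / (x - C θ))
        (∫ θ in (0:ℝ)..(2*S), -(f θ / (l - C θ)^2)) l := by
    intro f hf Bf hBf
    set G : ℂ → ℂ := fun z => ∫ θ in (0:ℝ)..(2*S), (f θ : ℂ) / (z - C θ) with hGdef
    have hU : IsOpen {z : ℂ | M < z.re} := isOpen_lt continuous_const Complex.continuous_re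
    have hGan : AnalyticOnNhd ℂ G {z : ℂ | M < z.re} := by
      refine DifferentiableOn.analyticOnNhd (fun z hz => ?_) hU
      exact (keyDeriv S C hCc M hCM f hf Bf hBf z hz).differentiableAt.differentiableWithinAt
    have hRe : ∀ x : ℝ, M < x →
        (G x).re = ∫ θ in (0:ℝ)..(2*S), f θ / (x - C θ) := by
      intro x hx
      have : G ↑x = ((∫ θ in (0:ℝ)..(2*S), f θ / (x - C θ) : ℝ) : ℂ) := by
        refine Eq.trans ?_ (cxInt (fun θ => f θ / (x - C θ)) 0 (2*S))
        refine intervalIntegral.integral_congr (fun θ _ => ?_)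
        push_cast
        ring
      rw [this, Complex.ofReal_re]
    constructor
    · intro x hx
      have han : AnalyticAt ℂ G ↑x := hGan _ (by simpa using hx)
      have h1 : ContDiffAt ℝ (⊤ : ℕ∞) (fun y : ℝ => (G ↑y).re) x := han.contDiffAt.real_of_complex
      have h2 : (fun y : ℝ => ∫ θ in (0:ℝ)..(2*S), f θ / (y - C θ))
          =ᶠ[𝓝 x] (fun y : ℝ => (G ↑y).re) :=
        eventually_of_mem (isOpen_Ioi.mem_nhds hx) (fun y hy => (hRe y hy).symm)
      exact (h1.congr_of_eventuallyEq h2).contDiffWithinAt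
    · intro l hl
      have hd := keyDeriv S C hCc M hCM f hf Bf hBf ↑l (by simpa using hl)
      have hval : (∫ θ in (0:ℝ)..(2*S), -((f θ : ℂ) / ((l:ℂ) - C θ)^2))
          = ((∫ θ in (0:ℝ)..(2*S), -(f θ / (l - C θ)^2) : ℝ) : ℂ) := by
        refine Eq.trans ?_ (cxInt (fun θ => -(f θ / (l - C θ)^2)) 0 (2*S))
        refine intervalIntegral.integral_congr (fun θ _ => ?_)
        push_cast
        ring
      rw [hval] at hd
      have hre := hd.real_of_complex
      rw [Complex.ofReal_re] at hre
      refine hre.congr_of_eventuallyEq ?_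
      exact eventually_of_mem (isOpen_Ioi.mem_nhds hl) (fun y hy => (hRe y hy).symm)
  have mainL := main (fun _ => (1:ℝ)) measurable_const 1 (fun θ => by norm_num)
  have mainF := main c hc_meas Bc hBc
  have hLcd : ContDiffOn ℝ (⊤ : ℕ∞) L (Set.Ioi M) := mainL.1.congr (fun x hx => hL x hx)
  have hFcd : ContDiffOn ℝ (⊤ : ℕ∞) F (Set.Ioi M) := mainF.1.congr (fun x hx => hF x hx)
  refine ⟨hLcd, hFcd, fun l hl => ?_⟩
  -- derivative values
  have hLev : L =ᶠ[𝓝 l] (fun x : ℝ => ∫ θ in (0:ℝ)..(2*S), (1:ℝ) / (x - C θ)) :=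
    eventually_of_mem (isOpen_Ioi.mem_nhds hl) (fun y hy => hL y hy)
  have hFev : F =ᶠ[𝓝 l] (fun x : ℝ => ∫ θ in (0:ℝ)..(2*S), c θ / (x - C θ)) :=
    eventually_of_mem (isOpen_Ioi.mem_nhds hl) (fun y hy => hF y hy)
  have hdL : HasDerivAt L (∫ θ in (0:ℝ)..(2*S), -((1:ℝ) / (l - C θ)^2)) l :=
    (mainL.2 l hl).congr_of_eventuallyEq hLev
  have hdF : HasDerivAt F (∫ θ in (0:ℝ)..(2*S), -(c θ / (l - C θ)^2)) l :=
    (mainF.2 l hl).congr_of_eventuallyEq hFev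
  rw [hdL.deriv, hdF.deriv]
  -- set up quantities for the final identity
  set δ : ℝ := l - M with hδdef
  have hδ : 0 < δ := by simp [hδdef]; linarith
  have hlow : ∀ θ, δ ≤ l - C θ := fun θ => by have := hCM θ; simp [hδdef]; linarith
  have hne : ∀ θ, l - C θ ≠ 0 := fun θ => ne_of_gt (lt_of_lt_of_le hδ (hlow θ))
  have hD2 : ∀ θ, δ^2 ≤ (l - C θ)^2 := fun θ =>
    pow_le_pow_left₀ hδ.le (hlow θ) 2
  have hzero := claimA S C Sg c s ⟨KC, hKC⟩ ⟨KS, hKS⟩ hC_per hSg_per hc_meas hs_meas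
    (hconv.mono fun θ h => ⟨h.1, h.2.1⟩) M l hCM hl ⟨BS, hBS⟩
  have hi1 : IntervalIntegrable (fun θ => -((1:ℝ) / (l - C θ)^2)) volume 0 (2*S) := by
    refine intInt (B := 1/δ^2) ?_ (fun θ => ?_)
    · exact (((measurable_const.sub hCc.measurable).pow_const 2).const_div 1).neg.aestronglyMeasurable
    · rw [norm_neg, Real.norm_eq_abs, abs_div, abs_one,
        abs_of_nonneg (by positivity : (0:ℝ) ≤ (l - C θ)^2)]
      exact div_le_div₀ (by norm_num) le_rfl (by positivity) (hD2 θ)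
  have hi2 : IntervalIntegrable (fun θ => l * -(c θ / (l - C θ)^2)) volume 0 (2*S) := by
    refine intInt (B := |l| * (Bc/δ^2)) ?_ (fun θ => ?_)
    · exact ((hc_meas.div ((measurable_const.sub hCc.measurable).pow_const 2)).neg.const_mul
        l).aestronglyMeasurable
    · rw [Real.norm_eq_abs, abs_mul, abs_neg, abs_div,
        abs_of_nonneg (by positivity : (0:ℝ) ≤ (l - C θ)^2)]
      refine mul_le_mul_of_nonneg_left ?_ (abs_nonneg l)
      refine div_le_div₀ ?_ (hBc θ) (by positivity) (hD2 θ)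
      exact le_trans (abs_nonneg _) (hBc 0)
  have key : (∫ θ in (0:ℝ)..(2*S), (-((1:ℝ) / (l - C θ)^2) - l * -(c θ / (l - C θ)^2)))
      = ∫ θ in (0:ℝ)..(2*S), (c θ / (l - C θ) - s θ * Sg θ / (l - C θ)^2) := by
    refine intervalIntegral.integral_congr_ae ?_
    refine hconv.mono (fun θ hθ _ => ?_)
    obtain ⟨_, _, hpy⟩ := hθ
    have h0 : l - C θ ≠ 0 := hne θ
    have e1 : -((1:ℝ) / (l - C θ)^2) - l * -(c θ / (l - C θ)^2)
        = (l * c θ - 1) / (l - C θ)^2 := by ring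
    have e2 : c θ / (l - C θ) - s θ * Sg θ / (l - C θ)^2
        = (c θ * (l - C θ) - s θ * Sg θ) / (l - C θ)^2 := by
      rw [sub_div]
      congr 1
      rw [pow_two, mul_div_mul_right _ _ h0]
    rw [e1, e2]
    congr 1
    linear_combination hpy
  have hsub : (∫ θ in (0:ℝ)..(2*S), -((1:ℝ) / (l - C θ)^2))
      - (∫ θ in (0:ℝ)..(2*S), l * -(c θ / (l - C θ)^2)) = 0 := by
    rw [← intervalIntegral.integral_sub hi1 hi2, key, hzero]
  rw [intervalIntegral.integral_const_mul] at hsub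
  linarith [hsub]
end

section
/- Suppose there are θ₁ < θ₂ with θ₂ − θ₁ < 2S such that the set of points in [θ₁, θ₁ + 2S) where C attains its maximum M is exactly the interval [θ₁, θ₂]. Then for every integer k ≥ 0, lim_{λ→M⁺} (λ − M)^{k+1} · L^{(k)}(λ) = (−1)^k · k! · (θ₂ − θ₁). -/
/-!
Differentiating under the integral sign gives `L⁽ᵏ⁾(λ) = (-1)ᵏ k! ∫ (λ - C)⁻⁽ᵏ⁺¹⁾`, so
`(λ - M)ᵏ⁺¹ L⁽ᵏ⁾(λ) = (-1)ᵏ k! ∫ ((λ - M) / (λ - C))ᵏ⁺¹`. The integrand lies in `[0, 1]` and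
tends to the indicator of the level set `{C = M}` as `λ → M⁺`, so by dominated convergence the
limit is `(-1)ᵏ k!` times the length of that set within one period, which is `θ₂ - θ₁`.
-/

open MeasureTheory Filter Set Topology

lemma hasDerivAt_integral_inv_sub_pow {C : ℝ → ℝ} {M : ℝ} (hC : Continuous C)
    (hCM : ∀ θ, C θ ≤ M) (a b : ℝ) (n : ℕ) {l : ℝ} (hl : M < l) :
    HasDerivAt (fun x => ∫ θ in a..b, ((x - C θ) ^ (n + 1))⁻¹)
      (∫ θ in a..b, -(n + 1) * ((l - C θ) ^ (n + 2))⁻¹) l := by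
  set ε := (l - M) / 2 with hε_def
  have hε : 0 < ε := by linarith
  have hball : ∀ x ∈ Metric.ball l ε, ∀ θ, ε ≤ x - C θ := fun x hx θ => by
    rw [Metric.mem_ball, Real.dist_eq, abs_lt] at hx
    linarith [hCM θ]
  have hcont : ∀ x ∈ Metric.ball l ε, ∀ m : ℕ, Continuous fun θ => ((x - C θ) ^ m)⁻¹ :=
    fun x hx m => ((continuous_const.sub hC).pow m).inv₀ fun θ =>
      pow_ne_zero m (hε.trans_le (hball x hx θ)).ne'
  have hl_mem : l ∈ Metric.ball l ε := Metric.mem_ball_self hε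
  refine (intervalIntegral.hasDerivAt_integral_of_dominated_loc_of_deriv_le
    (F := fun x θ => ((x - C θ) ^ (n + 1))⁻¹)
    (F' := fun x θ => -(n + 1) * ((x - C θ) ^ (n + 2))⁻¹)
    (bound := fun _ => (n + 1) * (ε ^ (n + 2))⁻¹) (Metric.ball_mem_nhds l hε)
    (eventually_of_mem (Metric.ball_mem_nhds l hε) fun x hx =>
      (hcont x hx (n + 1)).aestronglyMeasurable)
    ((hcont l hl_mem (n + 1)).intervalIntegrable a b)
    ((continuous_const.mul (hcont l hl_mem (n + 2))).aestronglyMeasurable)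
    (ae_of_all _ fun θ _ x hx => ?_) intervalIntegrable_const
    (ae_of_all _ fun θ _ x hx => ?_)).2
  · have hpos := hε.trans_le (hball x hx θ)
    rw [norm_mul, norm_neg, norm_inv, Real.norm_of_nonneg (by positivity : (0:ℝ) ≤ n + 1),
      Real.norm_of_nonneg (by positivity : 0 ≤ (x - C θ) ^ (n + 2))]
    gcongr
    exact hball x hx θ
  · have hne : x - C θ ≠ 0 := (hε.trans_le (hball x hx θ)).ne'
    refine ((((hasDerivAt_id' x).sub_const (C θ)).pow (n + 1)).inv
      (pow_ne_zero _ hne)).congr_deriv ?_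
    simp only [Pi.pow_apply]
    field_simp
    push_cast
    ring

lemma iteratedDeriv_eq_integral_inv_sub_pow {C : ℝ → ℝ} {M : ℝ} (hC : Continuous C)
    (hCM : ∀ θ, C θ ≤ M) {a b : ℝ} {L : ℝ → ℝ}
    (hL : ∀ l, M < l → L l = ∫ θ in a..b, 1 / (l - C θ)) (k : ℕ) {l : ℝ} (hl : M < l) :
    iteratedDeriv k L l = (-1) ^ k * k.factorial * ∫ θ in a..b, ((l - C θ) ^ (k + 1))⁻¹ := by
  induction k generalizing l with
  | zero => simp [hL l hl]
  | succ k ih =>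
    have hev : iteratedDeriv k L =ᶠ[𝓝 l]
        fun x => (-1) ^ k * k.factorial * ∫ θ in a..b, ((x - C θ) ^ (k + 1))⁻¹ :=
      eventually_of_mem (isOpen_Ioi.mem_nhds hl) fun x hx => ih hx
    rw [iteratedDeriv_succ, hev.deriv_eq,
      ((hasDerivAt_integral_inv_sub_pow hC hCM a b k hl).const_mul _).deriv,
      intervalIntegral.integral_const_mul, Nat.factorial_succ]
    push_cast
    ring

lemma tendsto_sub_pow_mul_integral_inv_sub_pow {C : ℝ → ℝ} {M : ℝ} (hC : Continuous C)
    (hCM : ∀ θ, C θ ≤ M) (a b : ℝ) {n : ℕ} (hn : n ≠ 0) :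
    Tendsto (fun l => (l - M) ^ n * ∫ θ in a..b, ((l - C θ) ^ n)⁻¹) (𝓝[>] M)
      (𝓝 (∫ θ in a..b, {θ | C θ = M}.indicator 1 θ)) := by
  have hpos : ∀ l, M < l → ∀ θ, 0 < l - C θ := fun l hl θ => by linarith [hCM θ]
  have hrewrite : ∀ᶠ l in 𝓝[>] M, ∫ θ in a..b, ((l - M) / (l - C θ)) ^ n =
      (l - M) ^ n * ∫ θ in a..b, ((l - C θ) ^ n)⁻¹ :=
    eventually_nhdsWithin_of_forall fun l _ => by
      rw [← intervalIntegral.integral_const_mul]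
      simp only [div_eq_mul_inv, mul_pow, inv_pow]
  refine Tendsto.congr' hrewrite ?_
  refine intervalIntegral.tendsto_integral_filter_of_dominated_convergence (fun _ => 1)
    (eventually_nhdsWithin_of_forall fun l hl => ?_)
    (eventually_nhdsWithin_of_forall fun l hl => ae_of_all _ fun θ _ => ?_)
    intervalIntegrable_const (ae_of_all _ fun θ _ => ?_)
  · exact ((continuous_const.div (continuous_const.sub hC)
      fun θ => (hpos l hl θ).ne').pow n).aestronglyMeasurable
  · have h0 : 0 ≤ (l - M) / (l - C θ) := div_nonneg (sub_nonneg.2 (le_of_lt hl)) (hpos l hl θ).le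
    have h1 : (l - M) / (l - C θ) ≤ 1 := (div_le_one (hpos l hl θ)).2 (by linarith [hCM θ])
    rw [Real.norm_of_nonneg (pow_nonneg h0 n)]
    exact pow_le_one₀ h0 h1
  · by_cases hθ : C θ = M
    · rw [indicator_of_mem (show θ ∈ {θ | C θ = M} from hθ), Pi.one_apply, hθ]
      refine tendsto_const_nhds.congr' (eventually_nhdsWithin_of_forall fun l hl => ?_)
      have hl' : l - M ≠ 0 := sub_ne_zero.2 (ne_of_gt hl)
      simp only [div_self hl', one_pow]
    · rw [indicator_of_notMem (show θ ∉ {θ | C θ = M} from hθ), ← zero_pow hn]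
      have hlt : 0 < M - C θ := sub_pos.2 ((hCM θ).lt_of_ne hθ)
      refine Tendsto.pow ?_ n
      have hcont : ContinuousAt (fun l => (l - M) / (l - C θ)) M :=
        (continuousAt_id.sub continuousAt_const).div (continuousAt_id.sub continuousAt_const)
          hlt.ne'
      simpa using hcont.tendsto.mono_left nhdsWithin_le_nhds

lemma integral_indicator_level_set_of_periodic {C : ℝ → ℝ} (hC : Measurable C) {T : ℝ}
    (hT : 0 ≤ T) (hper : Function.Periodic C T) (M : ℝ) {θ₁ θ₂ : ℝ} (h12 : θ₁ ≤ θ₂)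
    (hlevel : {θ | θ ∈ Ico θ₁ (θ₁ + T) ∧ C θ = M} = Icc θ₁ θ₂) :
    ∫ θ in (0 : ℝ)..T, {θ | C θ = M}.indicator 1 θ = θ₂ - θ₁ := by
  have hmeas : MeasurableSet {θ | C θ = M} := measurableSet_eq_fun hC measurable_const
  have hper' : Function.Periodic ({θ | C θ = M}.indicator (1 : ℝ → ℝ)) T := fun θ => by
    simp [indicator_apply, hper θ]
  calc ∫ θ in (0 : ℝ)..T, {θ | C θ = M}.indicator 1 θ
      = ∫ θ in θ₁..θ₁ + T, {θ | C θ = M}.indicator 1 θ := by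
        simpa using hper'.intervalIntegral_add_eq 0 θ₁
    _ = ∫ θ in Ico θ₁ (θ₁ + T), {θ | C θ = M}.indicator 1 θ := by
        rw [intervalIntegral.integral_of_le (by linarith), integral_Ioc_eq_integral_Ioo,
          integral_Ico_eq_integral_Ioo]
    _ = volume.real (Icc θ₁ θ₂) := by
        rw [setIntegral_indicator hmeas, ← hlevel]
        simp only [Pi.one_apply, setIntegral_const, smul_eq_mul, mul_one]
        rfl
    _ = θ₂ - θ₁ := Real.volume_real_Icc_of_le h12

theorem stmt4_general
    (S : ℝ) (hS : 0 < S)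
    (C : ℝ → ℝ)
    (hC_lip : ∃ K : NNReal, LipschitzWith K C)
    (hC_per : Function.Periodic C (2 * S))
    (M : ℝ) (hM : IsGreatest (C '' Set.Icc 0 (2 * S)) M)
    (L : ℝ → ℝ)
    (hL : ∀ l : ℝ, M < l → L l = ∫ θ in (0:ℝ)..(2*S), 1 / (l - C θ))
    (θ₁ θ₂ : ℝ) (hθ12 : θ₁ < θ₂)
    (hargmax : {θ | θ ∈ Set.Ico θ₁ (θ₁ + 2 * S) ∧ C θ = M} = Set.Icc θ₁ θ₂) :
    ∀ k : ℕ, Tendsto (fun l : ℝ => (l - M) ^ (k + 1) * iteratedDeriv k L l) (𝓝[>] M)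
      (𝓝 ((-1 : ℝ) ^ k * (k.factorial : ℝ) * (θ₂ - θ₁))) := by
  intro k
  obtain ⟨K, hK⟩ := hC_lip
  have hC : Continuous C := hK.continuous
  have hCM : ∀ θ, C θ ≤ M := by
    rw [← zero_add (2 * S), hC_per.image_Icc (by positivity) 0] at hM
    exact fun θ => hM.2 (mem_range_self θ)
  rw [← integral_indicator_level_set_of_periodic hC.measurable (by positivity) hC_per M hθ12.le
    hargmax]
  refine ((tendsto_sub_pow_mul_integral_inv_sub_pow hC hCM 0 (2 * S) k.add_one_ne_zero).const_mul
    ((-1 : ℝ) ^ k * k.factorial)).congr' (eventually_nhdsWithin_of_forall fun l hl => ?_)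
  dsimp only
  rw [iteratedDeriv_eq_integral_inv_sub_pow hC hCM hL k hl]
  ring

theorem stmt4
    (S : ℝ) (hS : 0 < S)
    (C Sg c s : ℝ → ℝ)
    (hC_lip : ∃ K : NNReal, LipschitzWith K C)
    (hSg_lip : ∃ K : NNReal, LipschitzWith K Sg)
    (hC_per : Function.Periodic C (2 * S))
    (hSg_per : Function.Periodic Sg (2 * S))
    (hc_meas : Measurable c) (hs_meas : Measurable s)
    (hc_bdd : ∃ B : ℝ, ∀ θ, |c θ| ≤ B) (hs_bdd : ∃ B : ℝ, ∀ θ, |s θ| ≤ B)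
    (hconv : ∀ᵐ θ ∂(volume : Measure ℝ), HasDerivAt C (-(s θ)) θ ∧ HasDerivAt Sg (c θ) θ ∧
      c θ * C θ + s θ * Sg θ = 1)
    (M : ℝ) (hM : IsGreatest (C '' Set.Icc 0 (2 * S)) M)
    (L F : ℝ → ℝ)
    (hL : ∀ l : ℝ, M < l → L l = ∫ θ in (0:ℝ)..(2*S), 1 / (l - C θ))
    (hF : ∀ l : ℝ, M < l → F l = ∫ θ in (0:ℝ)..(2*S), c θ / (l - C θ))
    (θ₁ θ₂ : ℝ) (hθ12 : θ₁ < θ₂) (hθS : θ₂ - θ₁ < 2 * S)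
    (hargmax : {θ | θ ∈ Set.Ico θ₁ (θ₁ + 2 * S) ∧ C θ = M} = Set.Icc θ₁ θ₂) :
    ∀ k : ℕ, Tendsto (fun l : ℝ => (l - M) ^ (k + 1) * iteratedDeriv k L l) (𝓝[>] M)
      (𝓝 ((-1 : ℝ) ^ k * (k.factorial : ℝ) * (θ₂ - θ₁))) :=
  stmt4_general S hS C hC_lip hC_per M hM L hL θ₁ θ₂ hθ12 hargmax
end

section
/- Assume M > 0. Then the function F is strictly decreasing and strictly convex on (M, +∞), with lim_{λ→+∞} F(λ) = 0 and lim_{λ→M⁺} F(λ) = +∞. -/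
/-!
Write `J n λ = ∫ c (λ - C)⁻ⁿ` and `I n λ = ∫ (λ - C)⁻ⁿ` over a period (`resolventMoment c C T n`
and `resolventMoment 1 C T n`), so that `F = J 1`, `F' = -J 2` and `F'' = 2 J 3`.
Differentiating `Σ (λ - C)⁻ⁿ` in `θ` and using `c C + s Σ = 1`, periodicity gives
`n λ J (n+1) = n I (n+1) + (n - 1) J n`. Hence `λ J 2 = I 2 > 0` and `2 λ J 3 = 2 I 3 + J 2 > 0`
since `λ > M > 0`. By `F' = -I 2 / λ`, `F - I 1 / (M + 1)` decreases on `(M, M + 1]`, and `I 1`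
blows up at `M` because near a maximum point `λ - C ≤ (λ - M) + K |θ - θ₀|`, whose inverse has
logarithmically divergent integral. The decay at infinity is `|F λ| ≤ ‖c‖₁ / (λ - M)`.
-/

open MeasureTheory Filter Set Topology

theorem hasDerivAt_inv_pow (n : ℕ) {y : ℝ} (hy : y ≠ 0) :
    HasDerivAt (fun y : ℝ => y⁻¹ ^ n) (-n * y⁻¹ ^ (n + 1)) y := by
  refine ((hasDerivAt_pow n y⁻¹).comp y (hasDerivAt_inv hy)).congr_deriv ?_
  rcases n with _ | n
  · simp
  · simp only [Nat.cast_add, Nat.cast_one, add_tsub_cancel_right, inv_pow]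
    field_simp
    ring

theorem lipschitzWith_inv_sub_pow {K : NNReal} {C : ℝ → ℝ} {M l : ℝ}
    (hC : LipschitzWith K C) (hCM : ∀ θ, C θ ≤ M) (hl : M < l) (n : ℕ) :
    ∃ K', LipschitzWith K' (fun θ => (l - C θ)⁻¹ ^ n) := by
  have hpos : ∀ x ∈ Iic M, 0 < l - x := fun x hx => sub_pos.2 (lt_of_le_of_lt hx hl)
  have hg : ∀ x ∈ Iic M,
      HasDerivWithinAt (fun x => (l - x)⁻¹ ^ n) (n * (l - x)⁻¹ ^ (n + 1)) (Iic M) x := by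
    intro x hx
    have := (hasDerivAt_inv_pow n (hpos x hx).ne').comp x ((hasDerivAt_id x).const_sub l)
    exact (this.congr_deriv (by ring)).hasDerivWithinAt
  have hbound : ∀ x ∈ Iic M, ‖n * (l - x)⁻¹ ^ (n + 1)‖ ≤ n * (l - M)⁻¹ ^ (n + 1) := by
    intro x hx
    have := hpos x hx
    rw [Real.norm_eq_abs, abs_of_nonneg (by positivity)]
    gcongr
    exact hx
  refine ⟨_, LipschitzWith.of_dist_le' (K := n * (l - M)⁻¹ ^ (n + 1) * K) fun x y => ?_⟩
  calc dist ((l - C x)⁻¹ ^ n) ((l - C y)⁻¹ ^ n)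
      ≤ n * (l - M)⁻¹ ^ (n + 1) * dist (C x) (C y) := by
        simpa only [Real.dist_eq, Real.norm_eq_abs] using
          (convex_Iic M).norm_image_sub_le_of_norm_hasDerivWithin_le hg hbound (hCM y) (hCM x)
    _ ≤ n * (l - M)⁻¹ ^ (n + 1) * (K * dist x y) := by
        have := sub_pos.2 hl
        gcongr
        exact hC.dist_le_mul x y
    _ = n * (l - M)⁻¹ ^ (n + 1) * K * dist x y := by ring

theorem AbsolutelyContinuousOnInterval.integral_eq_sub_of_ae_hasDerivAt {f f' : ℝ → ℝ}
    {a b : ℝ} (hf : AbsolutelyContinuousOnInterval f a b) (hf' : ∀ᵐ x, HasDerivAt f (f' x) x) :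
    ∫ x in a..b, f' x = f b - f a := by
  rw [← hf.integral_deriv_eq_sub]
  exact intervalIntegral.integral_congr_ae (hf'.mono fun x hx _ => hx.deriv.symm)

theorem strictAntiOn_of_hasDerivAt_neg_of_isOpen {D : Set ℝ} (hD : Convex ℝ D)
    (hDo : IsOpen D) {f f' : ℝ → ℝ} (hf : ∀ x ∈ D, HasDerivAt f (f' x) x)
    (hf' : ∀ x ∈ D, f' x < 0) :
    StrictAntiOn f D :=
  strictAntiOn_of_hasDerivWithinAt_neg hD (fun x hx => (hf x hx).continuousAt.continuousWithinAt)
    (by rw [hDo.interior_eq]; exact fun x hx => (hf x hx).hasDerivWithinAt)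
    (by rwa [hDo.interior_eq])

theorem strictConvexOn_of_hasDerivAt_of_hasDerivAt_pos {D : Set ℝ} (hD : Convex ℝ D)
    (hDo : IsOpen D) {f f' f'' : ℝ → ℝ} (hf : ∀ x ∈ D, HasDerivAt f (f' x) x)
    (hf' : ∀ x ∈ D, HasDerivAt f' (f'' x) x) (hf'' : ∀ x ∈ D, 0 < f'' x) :
    StrictConvexOn ℝ D f := by
  have hmono : StrictMonoOn f' D :=
    strictMonoOn_of_hasDerivWithinAt_pos hD
      (fun x hx => (hf' x hx).continuousAt.continuousWithinAt)
      (by rw [hDo.interior_eq]; exact fun x hx => (hf' x hx).hasDerivWithinAt)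
      (by rwa [hDo.interior_eq])
  refine StrictMonoOn.strictConvexOn_of_deriv hD
    (fun x hx => (hf x hx).continuousAt.continuousWithinAt) ?_
  rw [hDo.interior_eq]
  exact hmono.congr fun x hx => (hf x hx).deriv.symm

theorem tendsto_nhdsGT_atTop_of_hasDerivAt_le {f g f' g' : ℝ → ℝ} {a b : ℝ} (hab : a < b)
    (hf : ∀ x ∈ Ioc a b, HasDerivAt f (f' x) x) (hg : ∀ x ∈ Ioc a b, HasDerivAt g (g' x) x)
    (hle : ∀ x ∈ Ioo a b, f' x ≤ g' x) (hg_top : Tendsto g (𝓝[>] a) atTop) :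
    Tendsto f (𝓝[>] a) atTop := by
  have hanti : AntitoneOn (f - g) (Ioc a b) := by
    refine antitoneOn_of_hasDerivWithinAt_nonpos (convex_Ioc a b)
      (fun x hx => ((hf x hx).sub (hg x hx)).continuousAt.continuousWithinAt) (f' := f' - g')
      (fun x hx => ?_) (fun x hx => ?_)
    · rw [interior_Ioc] at hx
      have hx' := Ioo_subset_Ioc_self hx
      exact ((hf x hx').sub (hg x hx')).hasDerivWithinAt
    · rw [interior_Ioc] at hx
      exact sub_nonpos.2 (hle x hx)
  refine tendsto_atTop_mono' _ ?_ (tendsto_atTop_add_const_left _ (f b - g b) hg_top)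
  filter_upwards [Ioc_mem_nhdsGT hab] with x hx
  have := hanti hx (right_mem_Ioc.2 hab) hx.2
  simp only [Pi.sub_apply] at this
  linarith

noncomputable def resolventMoment (w C : ℝ → ℝ) (T : ℝ) (n : ℕ) (l : ℝ) : ℝ :=
  ∫ θ in 0..T, w θ * (l - C θ)⁻¹ ^ n

section ResolventMoment

variable {w C : ℝ → ℝ} {a b T M l : ℝ}

theorem IntervalIntegrable.mul_inv_sub_pow (hw : IntervalIntegrable w volume a b)
    (hC : Continuous C) (hCl : ∀ θ, C θ < l) (n : ℕ) :
    IntervalIntegrable (fun θ => w θ * (l - C θ)⁻¹ ^ n) volume a b :=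
  hw.mul_continuousOn <| ((continuous_const.sub hC).inv₀ fun θ => (sub_pos.2 (hCl θ)).ne').pow n
    |>.continuousOn

theorem hasDerivAt_resolventMoment (hw : IntervalIntegrable w volume 0 T) (hC : Continuous C)
    (hCM : ∀ θ, C θ ≤ M) (hl : M < l) (n : ℕ) :
    HasDerivAt (resolventMoment w C T n) (-n * resolventMoment w C T (n + 1) l) l := by
  set ε := (l - M) / 2 with hε_def
  have hε : 0 < ε := by linarith
  have hball := Metric.ball_mem_nhds l hε
  have hgap : ∀ x ∈ Metric.ball l ε, ∀ θ, ε ≤ x - C θ := by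
    intro x hx θ
    have := (abs_lt.1 (Real.dist_eq x l ▸ Metric.mem_ball.1 hx)).1
    linarith [hCM θ]
  have hCx : ∀ x ∈ Metric.ball l ε, ∀ θ, C θ < x := fun x hx θ => by linarith [hgap x hx θ]
  have hint := fun k => hw.mul_inv_sub_pow hC (hCx l (Metric.mem_ball_self hε)) k
  have hparam := intervalIntegral.hasDerivAt_integral_of_dominated_loc_of_deriv_le
    (F := fun x θ => w θ * (x - C θ)⁻¹ ^ n)
    (F' := fun x θ => -n * (w θ * (x - C θ)⁻¹ ^ (n + 1)))
    (bound := fun θ => n * (‖w θ‖ * ε⁻¹ ^ (n + 1))) hball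
    (eventually_of_mem hball fun x hx =>
      (hw.mul_inv_sub_pow hC (hCx x hx) n).def'.aestronglyMeasurable)
    (hint n) ((hint (n + 1)).const_mul _).def'.aestronglyMeasurable ?_
    (hw.norm.mul_const _ |>.const_mul _) ?_
  · unfold resolventMoment
    exact hparam.2.congr_deriv (intervalIntegral.integral_const_mul _ _)
  · refine Eventually.of_forall fun θ _ x hx => ?_
    have := hgap x hx θ
    rw [norm_mul, norm_neg, Real.norm_natCast, norm_mul, norm_pow, norm_inv,
      Real.norm_of_nonneg (show 0 ≤ x - C θ by linarith)]
    gcongr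
    exact inv_nonneg.2 (by linarith)
  · refine Eventually.of_forall fun θ _ x hx => ?_
    have hd := (hasDerivAt_inv_pow n (sub_pos.2 (hCx x hx θ)).ne').comp_sub_const x (C θ)
    exact (hd.const_mul (w θ)).congr_deriv (by ring)

theorem resolventMoment_one_pos (hT : 0 < T) (hC : Continuous C) (hCl : ∀ θ, C θ < l) (n : ℕ) :
    0 < resolventMoment 1 C T n l :=
  intervalIntegral.intervalIntegral_pos_of_pos_on
    (intervalIntegrable_const.mul_inv_sub_pow hC hCl n)
    (fun θ _ => by simpa using pow_pos (sub_pos.2 (hCl θ)) n) hT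

theorem tendsto_resolventMoment_atTop_nhds_zero (hw : IntervalIntegrable w volume 0 T)
    (hCM : ∀ θ, C θ ≤ M) {n : ℕ} (hn : n ≠ 0) :
    Tendsto (resolventMoment w C T n) atTop (𝓝 0) := by
  have hbound : ∀ᶠ l in atTop,
      ‖resolventMoment w C T n l‖ ≤ (∫ θ in uIoc 0 T, ‖w θ‖) * (l - M)⁻¹ ^ n := by
    filter_upwards [eventually_gt_atTop M] with l hl
    refine (intervalIntegral.norm_integral_le_integral_norm_uIoc).trans ?_
    rw [← integral_mul_const]
    refine integral_mono_of_nonneg (Eventually.of_forall fun θ => norm_nonneg _)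
      (hw.def'.norm.mul_const _) (Eventually.of_forall fun θ => ?_)
    have := sub_pos.2 ((hCM θ).trans_lt hl)
    simp only [norm_mul, norm_pow, norm_inv, Real.norm_of_nonneg this.le]
    gcongr
    exact hCM θ
  refine squeeze_zero_norm' hbound ?_
  have hinv := tendsto_inv_atTop_zero.comp (tendsto_atTop_add_const_right _ (-M) tendsto_id)
  simpa [zero_pow hn, sub_eq_add_neg] using (hinv.pow n).const_mul (∫ θ in uIoc 0 T, ‖w θ‖)

theorem log_le_resolventMoment_one {K : NNReal} (hK : 0 < K) (hC : LipschitzWith K C)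
    (hC_per : Function.Periodic C T) (hT : 0 < T) (hCM : ∀ θ, C θ ≤ M) {θ₀ : ℝ}
    (hθ₀ : C θ₀ = M) (hl : M < l) :
    Real.log (1 + K * T / (l - M)) / K ≤ resolventMoment 1 C T 1 l := by
  set e := l - M with he
  have he0 : 0 < e := sub_pos.2 hl
  have hCl : ∀ θ, C θ < l := fun θ => (hCM θ).trans_lt hl
  have hshift : resolventMoment 1 C T 1 l = ∫ u in 0..T, (l - C (u + θ₀))⁻¹ := by
    have hper : Function.Periodic (fun θ => (l - C θ)⁻¹) T := fun θ => by simp only [hC_per θ]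
    rw [intervalIntegral.integral_comp_add_right (fun θ => (l - C θ)⁻¹) θ₀, zero_add, add_comm,
      hper.intervalIntegral_add_eq θ₀ 0, zero_add]
    simp [resolventMoment]
  have hlog : ∫ u in 0..T, (K * u + e)⁻¹ = Real.log (1 + K * T / e) / K := by
    rw [intervalIntegral.integral_comp_mul_add (fun x => x⁻¹) (NNReal.coe_pos.2 hK).ne',
      integral_inv_of_pos (by simpa using he0) (by positivity), mul_zero, zero_add, add_div,
      div_self he0.ne', add_comm, smul_eq_mul, inv_mul_eq_div]
  rw [hshift, ← hlog]
  refine intervalIntegral.integral_mono_on hT.le ?_ ?_ fun u hu => ?_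
  · refine (continuous_const.mul continuous_id |>.add continuous_const).continuousOn.inv₀
      (fun u hu => ?_) |>.intervalIntegrable
    rw [uIcc_of_le hT.le] at hu
    exact (add_pos_of_nonneg_of_pos (mul_nonneg K.coe_nonneg hu.1) he0).ne'
  · exact ((intervalIntegrable_const (c := (1 : ℝ))).mul_inv_sub_pow
      (hC.continuous.comp (continuous_add_const θ₀)) (fun u => hCl _) 1).congr fun θ _ => by simp
  · have hlip := (le_abs_self _).trans (hC.dist_le_mul θ₀ (u + θ₀))
    rw [hθ₀, Real.dist_eq, abs_sub_comm, add_sub_cancel_right, abs_of_nonneg hu.1] at hlip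
    exact inv_anti₀ (sub_pos.2 (hCl _)) (by linarith)

theorem tendsto_resolventMoment_one_nhdsGT_atTop {K : NNReal} (hC : LipschitzWith K C)
    (hC_per : Function.Periodic C T) (hT : 0 < T) (hCM : ∀ θ, C θ ≤ M) {θ₀ : ℝ}
    (hθ₀ : C θ₀ = M) : Tendsto (resolventMoment 1 C T 1) (𝓝[>] M) atTop := by
  have hK : 0 < K + 1 := by positivity
  refine tendsto_atTop_mono' _ (eventually_mem_nhdsWithin.mono fun l hl =>
    log_le_resolventMoment_one hK (hC.weaken le_self_add) hC_per hT hCM hθ₀ hl) ?_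
  have hsub : Tendsto (fun l => l - M) (𝓝[>] M) (𝓝[>] 0) :=
    tendsto_nhdsWithin_of_tendsto_nhds_of_eventually_within _
      ((continuous_sub_right M).tendsto' M 0 (sub_self M) |>.mono_left nhdsWithin_le_nhds)
      (eventually_mem_nhdsWithin.mono fun l hl => mem_Ioi.2 (sub_pos.2 hl))
  have := (tendsto_inv_nhdsGT_zero.comp hsub).const_mul_atTop (mul_pos (NNReal.coe_pos.2 hK) hT)
  simpa only [div_eq_mul_inv, Function.comp_def] using ((Real.tendsto_log_atTop.comp
    (tendsto_atTop_add_const_left _ 1 this)).atTop_div_const (NNReal.coe_pos.2 hK))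

end ResolventMoment

structure IsConvexTrigParam (T : ℝ) (C Sg c s : ℝ → ℝ) : Prop where
  period_pos : 0 < T
  lipschitzWith_C : ∃ K : NNReal, LipschitzWith K C
  lipschitzWith_Sg : ∃ K : NNReal, LipschitzWith K Sg
  periodic_C : Function.Periodic C T
  periodic_Sg : Function.Periodic Sg T
  intervalIntegrable_c : IntervalIntegrable c volume 0 T
  ae_hasDerivAt :
    ∀ᵐ θ, HasDerivAt C (-s θ) θ ∧ HasDerivAt Sg (c θ) θ ∧ c θ * C θ + s θ * Sg θ = 1

namespace IsConvexTrigParam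

variable {T M l θ₀ : ℝ} {C Sg c s : ℝ → ℝ}

theorem continuous_C (h : IsConvexTrigParam T C Sg c s) : Continuous C :=
  h.lipschitzWith_C.choose_spec.continuous

theorem resolventMoment_recursion (h : IsConvexTrigParam T C Sg c s) (hCM : ∀ θ, C θ ≤ M)
    (hl : M < l) (n : ℕ) :
    n * l * resolventMoment c C T (n + 1) l
      = n * resolventMoment 1 C T (n + 1) l + (n - 1) * resolventMoment c C T n l := by
  obtain ⟨-, ⟨K, hC⟩, ⟨K', hSg⟩, hC_per, hSg_per, hc, hconv⟩ := h
  have hCl : ∀ θ, C θ < l := fun θ => (hCM θ).trans_lt hl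
  obtain ⟨K'', hu⟩ := lipschitzWith_inv_sub_pow hC hCM hl n
  have hAC : AbsolutelyContinuousOnInterval (fun θ => Sg θ * (l - C θ)⁻¹ ^ n) 0 T :=
    hSg.lipschitzOnWith.absolutelyContinuousOnInterval.mul
      hu.lipschitzOnWith.absolutelyContinuousOnInterval
  have hderiv : ∀ᵐ θ, HasDerivAt (fun θ => Sg θ * (l - C θ)⁻¹ ^ n)
      (n * l * (c θ * (l - C θ)⁻¹ ^ (n + 1)) - n * (l - C θ)⁻¹ ^ (n + 1)
        - (n - 1) * (c θ * (l - C θ)⁻¹ ^ n)) θ := by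
    filter_upwards [hconv] with θ ⟨hCd, hSgd, hpyth⟩
    have hne : l - C θ ≠ 0 := (sub_pos.2 (hCl θ)).ne'
    have hinv : (l - C θ) * (l - C θ)⁻¹ = 1 := mul_inv_cancel₀ hne
    refine (hSgd.mul ((hasDerivAt_inv_pow n hne).comp θ (hCd.const_sub l))).congr_deriv ?_
    simp only [Function.comp_apply]
    linear_combination (-(n : ℝ) * (l - C θ)⁻¹ ^ (n + 1)) * hpyth
      - (n * c θ * (l - C θ)⁻¹ ^ n) * hinv
  have hJ := hc.mul_inv_sub_pow hC.continuous hCl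
  have hI : IntervalIntegrable (fun θ => (l - C θ)⁻¹ ^ (n + 1)) volume 0 T := by
    simpa using (intervalIntegrable_const (c := (1 : ℝ))).mul_inv_sub_pow hC.continuous hCl _
  have hFTC := hAC.integral_eq_sub_of_ae_hasDerivAt hderiv
  rw [intervalIntegral.integral_sub (((hJ _).const_mul _).sub (hI.const_mul _))
    ((hJ _).const_mul _), intervalIntegral.integral_sub ((hJ _).const_mul _) (hI.const_mul _),
    intervalIntegral.integral_const_mul, intervalIntegral.integral_const_mul,
    intervalIntegral.integral_const_mul, hSg_per.eq, hC_per.eq, sub_self] at hFTC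
  simp only [resolventMoment, Pi.one_apply, one_mul]
  linarith

theorem mul_resolventMoment_two (h : IsConvexTrigParam T C Sg c s) (hCM : ∀ θ, C θ ≤ M)
    (hl : M < l) : l * resolventMoment c C T 2 l = resolventMoment 1 C T 2 l := by
  simpa using h.resolventMoment_recursion hCM hl 1

theorem resolventMoment_one_pos (h : IsConvexTrigParam T C Sg c s) (hCM : ∀ θ, C θ ≤ M)
    (hl : M < l) (n : ℕ) : 0 < resolventMoment 1 C T n l :=
  _root_.resolventMoment_one_pos h.period_pos h.continuous_C (fun θ => (hCM θ).trans_lt hl) n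

theorem resolventMoment_two_pos (h : IsConvexTrigParam T C Sg c s) (hCM : ∀ θ, C θ ≤ M)
    (hM : 0 ≤ M) (hl : M < l) : 0 < resolventMoment c C T 2 l := by
  have hI := h.resolventMoment_one_pos hCM hl 2
  rw [← h.mul_resolventMoment_two hCM hl] at hI
  exact pos_of_mul_pos_right hI (hM.trans hl.le)

theorem resolventMoment_three_pos (h : IsConvexTrigParam T C Sg c s) (hCM : ∀ θ, C θ ≤ M)
    (hM : 0 ≤ M) (hl : M < l) : 0 < resolventMoment c C T 3 l := by
  have hrec := h.resolventMoment_recursion hCM hl 2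
  norm_num at hrec
  nlinarith [h.resolventMoment_one_pos hCM hl 3, h.resolventMoment_two_pos hCM hM hl]

theorem hasDerivAt_resolventMoment (h : IsConvexTrigParam T C Sg c s) (hCM : ∀ θ, C θ ≤ M)
    (hl : M < l) (n : ℕ) :
    HasDerivAt (resolventMoment c C T n) (-n * resolventMoment c C T (n + 1) l) l :=
  _root_.hasDerivAt_resolventMoment h.intervalIntegrable_c h.continuous_C hCM hl n

theorem strictAntiOn_resolventMoment (h : IsConvexTrigParam T C Sg c s) (hCM : ∀ θ, C θ ≤ M)
    (hM : 0 ≤ M) : StrictAntiOn (resolventMoment c C T 1) (Ioi M) :=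
  strictAntiOn_of_hasDerivAt_neg_of_isOpen (convex_Ioi M) isOpen_Ioi
    (fun l hl => h.hasDerivAt_resolventMoment hCM hl 1)
    fun l hl => by simpa using h.resolventMoment_two_pos hCM hM hl

theorem strictConvexOn_resolventMoment (h : IsConvexTrigParam T C Sg c s) (hCM : ∀ θ, C θ ≤ M)
    (hM : 0 ≤ M) : StrictConvexOn ℝ (Ioi M) (resolventMoment c C T 1) :=
  strictConvexOn_of_hasDerivAt_of_hasDerivAt_pos (convex_Ioi M) isOpen_Ioi
    (fun l hl => h.hasDerivAt_resolventMoment hCM hl 1)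
    (fun l hl => (h.hasDerivAt_resolventMoment hCM hl 2).const_mul _)
    fun l hl => by simpa using h.resolventMoment_three_pos hCM hM hl

theorem tendsto_resolventMoment_nhdsGT_atTop (h : IsConvexTrigParam T C Sg c s)
    (hCM : ∀ θ, C θ ≤ M) (hM : 0 ≤ M) (hθ₀ : C θ₀ = M) :
    Tendsto (resolventMoment c C T 1) (𝓝[>] M) atTop := by
  obtain ⟨K, hC⟩ := h.lipschitzWith_C
  refine tendsto_nhdsGT_atTop_of_hasDerivAt_le (lt_add_one M)
    (fun l hl => h.hasDerivAt_resolventMoment hCM hl.1 1)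
    (fun l hl => (_root_.hasDerivAt_resolventMoment (w := 1) intervalIntegrable_const
      h.continuous_C hCM hl.1 1).div_const (M + 1)) (fun l hl => ?_)
    ((tendsto_resolventMoment_one_nhdsGT_atTop hC h.periodic_C h.period_pos hCM
      hθ₀).atTop_div_const (by linarith))
  simp only [Nat.cast_one, neg_one_mul, one_add_one_eq_two, neg_div, neg_le_neg_iff]
  rw [div_le_iff₀ (by linarith), ← h.mul_resolventMoment_two hCM hl.1]
  nlinarith [hl.2, h.resolventMoment_two_pos hCM hM hl.1]

end IsConvexTrigParam

theorem stmt7_general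
    (S : ℝ) (hS : 0 < S)
    (C Sg c s : ℝ → ℝ)
    (hC_lip : ∃ K : NNReal, LipschitzWith K C)
    (hSg_lip : ∃ K : NNReal, LipschitzWith K Sg)
    (hC_per : Function.Periodic C (2 * S))
    (hSg_per : Function.Periodic Sg (2 * S))
    (hc_meas : Measurable c)
    (hc_bdd : ∃ B : ℝ, ∀ θ, |c θ| ≤ B)
    (hconv : ∀ᵐ θ ∂(volume : Measure ℝ), HasDerivAt C (-(s θ)) θ ∧ HasDerivAt Sg (c θ) θ ∧
      c θ * C θ + s θ * Sg θ = 1)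
    (M : ℝ) (hM : IsGreatest (C '' Set.Icc 0 (2 * S)) M)
    (F : ℝ → ℝ)
    (hF : ∀ l : ℝ, M < l → F l = ∫ θ in (0:ℝ)..(2*S), c θ / (l - C θ))
    (hM0 : 0 < M) :
    StrictAntiOn F (Set.Ioi M) ∧ StrictConvexOn ℝ (Set.Ioi M) F ∧
      Tendsto F atTop (𝓝 0) ∧ Tendsto F (𝓝[>] M) atTop := by
  set T := 2 * S
  have hT : 0 < T := by positivity
  rw [← zero_add T, hC_per.image_Icc hT 0] at hM
  obtain ⟨⟨θ₀, hθ₀⟩, hCM⟩ := hM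
  replace hCM : ∀ θ, C θ ≤ M := fun θ => hCM ⟨θ, rfl⟩
  obtain ⟨B, hB⟩ := hc_bdd
  have h : IsConvexTrigParam T C Sg c s := ⟨hT, hC_lip, hSg_lip, hC_per, hSg_per,
    (intervalIntegrable_const (c := B)).mono_fun' hc_meas.aestronglyMeasurable
      (ae_of_all _ fun θ => (Real.norm_eq_abs _).trans_le (hB θ)), hconv⟩
  have hFJ : EqOn F (resolventMoment c C T 1) (Ioi M) := fun l hl => by
    simp [hF l hl, resolventMoment, div_eq_mul_inv]
  exact ⟨(h.strictAntiOn_resolventMoment hCM hM0.le).congr hFJ.symm,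
    (h.strictConvexOn_resolventMoment hCM hM0.le).congr hFJ.symm,
    (tendsto_resolventMoment_atTop_nhds_zero h.intervalIntegrable_c hCM one_ne_zero).congr'
      ((eventually_gt_atTop M).mono fun l hl => (hFJ hl).symm),
    (h.tendsto_resolventMoment_nhdsGT_atTop hCM hM0.le hθ₀).congr'
      (eventually_mem_nhdsWithin.mono fun l hl => (hFJ hl).symm)⟩

theorem stmt7
    (S : ℝ) (hS : 0 < S)
    (C Sg c s : ℝ → ℝ)
    (hC_lip : ∃ K : NNReal, LipschitzWith K C)
    (hSg_lip : ∃ K : NNReal, LipschitzWith K Sg)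
    (hC_per : Function.Periodic C (2 * S))
    (hSg_per : Function.Periodic Sg (2 * S))
    (hc_meas : Measurable c) (hs_meas : Measurable s)
    (hc_bdd : ∃ B : ℝ, ∀ θ, |c θ| ≤ B) (hs_bdd : ∃ B : ℝ, ∀ θ, |s θ| ≤ B)
    (hconv : ∀ᵐ θ ∂(volume : Measure ℝ), HasDerivAt C (-(s θ)) θ ∧ HasDerivAt Sg (c θ) θ ∧
      c θ * C θ + s θ * Sg θ = 1)
    (M : ℝ) (hM : IsGreatest (C '' Set.Icc 0 (2 * S)) M)
    (L F : ℝ → ℝ)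
    (hL : ∀ l : ℝ, M < l → L l = ∫ θ in (0:ℝ)..(2*S), 1 / (l - C θ))
    (hF : ∀ l : ℝ, M < l → F l = ∫ θ in (0:ℝ)..(2*S), c θ / (l - C θ))
    (hM0 : 0 < M) :
    StrictAntiOn F (Set.Ioi M) ∧ StrictConvexOn ℝ (Set.Ioi M) F ∧
      Tendsto F atTop (𝓝 0) ∧ Tendsto F (𝓝[>] M) atTop :=
  stmt7_general S hS C Sg c s hC_lip hSg_lip hC_per hSg_per hc_meas hc_bdd hconv M hM F hF hM0
end

section
/- For every integer k ≥ 0, lim_{λ→+∞} λ^{k+2} · F^{(k)}(λ) = (−1)^k · (k+1)! · S, where F^{(k)} denotes the k-th derivative of F. -/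
open MeasureTheory Filter Set Topology

/-!
Differentiating under the integral sign, `F⁽ᵏ⁾(λ) = (-1)ᵏ k! ∫ c / (λ - C)ᵏ⁺¹`. Uniformly in `θ`,
`λᵏ⁺² / (λ - C)ᵏ⁺¹ = λ + (k + 1) C + O(1 / λ)`, so `λᵏ⁺² F⁽ᵏ⁾(λ)` is
`(-1)ᵏ k! (λ ∫ c + (k + 1) ∫ c C) + O(1 / λ)`. Over a period `∫ c = ∫ Σ' = 0`, and integrating
`(Σ C)' = c C - s Σ` against the Pythagorean identity `c C + s Σ = 1` gives `∫ c C = S`.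
-/

lemma abs_sq_div_sub_le {R x y : ℝ} (hy : |y| ≤ R) (hx : 2 * R + 1 ≤ x) :
    |y ^ 2 / (x - y)| ≤ 2 * R ^ 2 / x := by
  have hR : 0 ≤ R := (abs_nonneg y).trans hy
  have hx0 : 0 < x := by linarith
  have hxy : x / 2 ≤ x - y := by linarith [(abs_le.1 hy).2]
  have hy2 : y ^ 2 ≤ R ^ 2 := by rw [← sq_abs]; gcongr
  rw [abs_of_nonneg (div_nonneg (sq_nonneg y) (by linarith))]
  calc y ^ 2 / (x - y) ≤ y ^ 2 / (x / 2) := by gcongr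
    _ = 2 * y ^ 2 / x := by field_simp
    _ ≤ 2 * R ^ 2 / x := by gcongr

lemma abs_div_sub_le_two {R x y : ℝ} (hy : |y| ≤ R) (hx : 2 * R + 1 ≤ x) :
    |x / (x - y)| ≤ 2 := by
  have hx0 : 0 < x := by linarith [(abs_nonneg y).trans hy]
  have hxy : x / 2 ≤ x - y := by linarith [(abs_le.1 hy).2]
  rw [abs_of_pos (div_pos hx0 (by linarith)), div_le_iff₀ (by linarith)]
  linarith

lemma exists_abs_pow_div_sub_pow_sub_le (k : ℕ) (R : ℝ) :
    ∃ D : ℝ, ∀ x y : ℝ, 2 * R + 1 ≤ x → |y| ≤ R →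
      |x ^ (k + 2) / (x - y) ^ (k + 1) - x - (k + 1) * y| ≤ D / x := by
  induction k with
  | zero =>
    refine ⟨2 * R ^ 2, fun x y hx hy => ?_⟩
    have hxy : x - y ≠ 0 := by linarith [(abs_le.1 hy).2, (abs_nonneg y).trans hy]
    convert abs_sq_div_sub_le hy hx using 2
    field_simp
    ring
  | succ k ih =>
    obtain ⟨D, hD⟩ := ih
    refine ⟨2 * D + (k + 2) * (2 * R ^ 2), fun x y hx hy => ?_⟩
    have hxy : x - y ≠ 0 := by linarith [(abs_le.1 hy).2, (abs_nonneg y).trans hy]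
    have hx0 : 0 < x := by linarith [(abs_nonneg y).trans hy]
    have hrec : x ^ (k + 1 + 2) / (x - y) ^ (k + 1 + 1) - x - ((k + 1 : ℕ) + 1) * y
        = x / (x - y) * (x ^ (k + 2) / (x - y) ^ (k + 1) - x - (k + 1) * y)
          + (k + 2) * (y ^ 2 / (x - y)) := by
      push_cast
      field_simp
      ring
    rw [hrec]
    calc _ ≤ |x / (x - y)| * |x ^ (k + 2) / (x - y) ^ (k + 1) - x - (k + 1) * y|
          + (k + 2) * |y ^ 2 / (x - y)| := by
          grw [abs_add_le, abs_mul, abs_mul, abs_of_nonneg (by positivity : (0 : ℝ) ≤ k + 2)]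
      _ ≤ 2 * (D / x) + (k + 2) * (2 * R ^ 2 / x) := by
          gcongr
          · exact abs_div_sub_le_two hy hx
          · exact hD x y hx hy
          · exact abs_sq_div_sub_le hy hx
      _ = (2 * D + (k + 2) * (2 * R ^ 2)) / x := by ring

section ResolventIntegral

variable {f C : ℝ → ℝ} {a b M x : ℝ}

lemma intervalIntegrable_div_sub_pow (hf : IntervalIntegrable f volume a b) (hC : Continuous C)
    (hCM : ∀ θ, C θ ≤ M) (hx : M < x) (n : ℕ) :
    IntervalIntegrable (fun θ => f θ / (x - C θ) ^ n) volume a b := by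
  have hinv : Continuous fun θ => ((x - C θ) ^ n)⁻¹ :=
    ((continuous_const.sub hC).pow n).inv₀ fun θ =>
      pow_ne_zero _ (sub_pos.2 ((hCM θ).trans_lt hx)).ne'
  simpa only [div_eq_mul_inv] using hf.mul_continuousOn hinv.continuousOn

lemma hasDerivAt_integral_div_sub_pow (hf : IntervalIntegrable f volume a b) (hC : Continuous C)
    (hCM : ∀ θ, C θ ≤ M) (hx : M < x) (n : ℕ) :
    HasDerivAt (fun y => ∫ θ in a..b, f θ / (y - C θ) ^ (n + 1))
      (-(n + 1) * ∫ θ in a..b, f θ / (x - C θ) ^ (n + 2)) x := by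
  set ε := (x - M) / 2 with hε
  have hε0 : 0 < ε := by linarith
  have hball : ∀ y ∈ Metric.ball x ε, M < y ∧ ∀ θ, ε ≤ y - C θ := by
    intro y hy
    rw [Metric.mem_ball, Real.dist_eq, abs_lt] at hy
    exact ⟨by linarith, fun θ => by linarith [hCM θ]⟩
  have hderiv : ∀ θ, ∀ y ∈ Metric.ball x ε, HasDerivAt (fun y => f θ / (y - C θ) ^ (n + 1))
      (-(n + 1) * (f θ / (y - C θ) ^ (n + 2))) y := by
    intro θ y hy
    have hne : y - C θ ≠ 0 := (hε0.trans_le ((hball y hy).2 θ)).ne'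
    have hpow := ((hasDerivAt_id y).sub_const (C θ)).fun_pow (n + 1)
    have h := (hpow.fun_inv (pow_ne_zero _ hne)).const_mul (f θ)
    simp only [id, Nat.add_sub_cancel, ← div_eq_mul_inv] at h
    refine h.congr_deriv ?_
    field_simp
    push_cast
    ring
  have hbound : ∀ θ, ∀ y ∈ Metric.ball x ε,
      ‖-(n + 1) * (f θ / (y - C θ) ^ (n + 2))‖ ≤ (n + 1) * (|f θ| / ε ^ (n + 2)) := by
    intro θ y hy
    have hεy := (hball y hy).2 θ
    rw [norm_mul, norm_div, norm_pow, Real.norm_eq_abs, Real.norm_eq_abs, Real.norm_eq_abs,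
      abs_neg, abs_of_nonneg (by linarith : (0 : ℝ) ≤ y - C θ), abs_of_pos (by positivity)]
    gcongr
  have hint : ∀ y, M < y → ∀ m : ℕ, IntervalIntegrable (fun θ => f θ / (y - C θ) ^ m) volume a b :=
    fun y hy => intervalIntegrable_div_sub_pow hf hC hCM hy
  have key := intervalIntegral.hasDerivAt_integral_of_dominated_loc_of_deriv_le
    (bound := fun θ => (n + 1) * (|f θ| / ε ^ (n + 2))) (Metric.ball_mem_nhds x hε0)
    (eventually_of_mem (Metric.ball_mem_nhds x hε0) fun y hy =>
      (hint y (hball y hy).1 _).aestronglyMeasurable_restrict_uIoc)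
    (hint x hx _) ((hint x hx _).const_mul _).aestronglyMeasurable_restrict_uIoc
    (Eventually.of_forall fun θ _ => hbound θ) ((hf.norm.div_const _).const_mul _)
    (Eventually.of_forall fun θ _ => hderiv θ)
  simpa only [intervalIntegral.integral_const_mul] using key.2

lemma iteratedDeriv_eq_integral_div_sub_pow {F : ℝ → ℝ} (hf : IntervalIntegrable f volume a b)
    (hC : Continuous C) (hCM : ∀ θ, C θ ≤ M)
    (hF : ∀ x, M < x → F x = ∫ θ in a..b, f θ / (x - C θ)) (k : ℕ) (hx : M < x) :
    iteratedDeriv k F x = (-1) ^ k * k.factorial * ∫ θ in a..b, f θ / (x - C θ) ^ (k + 1) := by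
  induction k generalizing x with
  | zero => simp [hF x hx]
  | succ k ih =>
    have hev : iteratedDeriv k F =ᶠ[𝓝 x]
        fun y => (-1) ^ k * k.factorial * ∫ θ in a..b, f θ / (y - C θ) ^ (k + 1) :=
      eventually_of_mem (Ioi_mem_nhds hx) fun y hy => ih hy
    rw [iteratedDeriv_succ, hev.deriv_eq,
      ((hasDerivAt_integral_div_sub_pow hf hC hCM hx k).const_mul _).deriv, Nat.factorial_succ]
    push_cast
    ring

lemma tendsto_pow_mul_integral_div_sub_pow {R : ℝ} (hab : a ≤ b)
    (hf : IntervalIntegrable f volume a b) (hf0 : ∫ θ in a..b, f θ = 0) (hC : Continuous C)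
    (hCR : ∀ θ, |C θ| ≤ R) (k : ℕ) :
    Tendsto (fun x => x ^ (k + 2) * ∫ θ in a..b, f θ / (x - C θ) ^ (k + 1)) atTop
      (𝓝 ((k + 1) * ∫ θ in a..b, f θ * C θ)) := by
  obtain ⟨D, hD⟩ := exists_abs_pow_div_sub_pow_sub_le k R
  have hR : 0 ≤ R := (abs_nonneg _).trans (hCR 0)
  have hCM : ∀ θ, C θ ≤ R := fun θ => (le_abs_self _).trans (hCR θ)
  rw [tendsto_iff_norm_sub_tendsto_zero]
  refine squeeze_zero' (Eventually.of_forall fun _ => norm_nonneg _) ?_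
    (tendsto_const_nhds.div_atTop tendsto_id :
      Tendsto (fun x => D * (∫ θ in a..b, |f θ|) / x) _ _)
  filter_upwards [eventually_ge_atTop (2 * R + 1)] with x hx
  have hpow := intervalIntegrable_div_sub_pow hf hC hCM (by linarith : R < x) (k + 1)
  have hfC : IntervalIntegrable (fun θ => f θ * C θ) volume a b :=
    hf.mul_continuousOn hC.continuousOn
  have hexpand : x ^ (k + 2) * (∫ θ in a..b, f θ / (x - C θ) ^ (k + 1))
        - (k + 1) * ∫ θ in a..b, f θ * C θ
      = ∫ θ in a..b, f θ * (x ^ (k + 2) / (x - C θ) ^ (k + 1) - x - (k + 1) * C θ) := by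
    have hint : ∀ θ, f θ * (x ^ (k + 2) / (x - C θ) ^ (k + 1) - x - (k + 1) * C θ)
        = x ^ (k + 2) * (f θ / (x - C θ) ^ (k + 1)) - x * f θ - (k + 1) * (f θ * C θ) :=
      fun θ => by ring
    simp only [hint]
    rw [intervalIntegral.integral_sub ((hpow.const_mul _).sub (hf.const_mul _)) (hfC.const_mul _),
      intervalIntegral.integral_sub (hpow.const_mul _) (hf.const_mul _),
      intervalIntegral.integral_const_mul, intervalIntegral.integral_const_mul,
      intervalIntegral.integral_const_mul, hf0]
    ring
  rw [Real.norm_eq_abs, hexpand, ← Real.norm_eq_abs]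
  calc _ ≤ ∫ θ in a..b, |f θ| * (D / x) := by
        refine intervalIntegral.norm_integral_le_of_norm_le hab (ae_of_all _ fun θ _ => ?_)
          (hf.norm.mul_const _)
        rw [Real.norm_eq_abs, abs_mul]
        exact mul_le_mul_of_nonneg_left (hD x (C θ) hx (hCR θ)) (abs_nonneg _)
    _ = D * (∫ θ in a..b, |f θ|) / x := by rw [intervalIntegral.integral_mul_const]; ring

end ResolventIntegral

namespace LipschitzWith

variable {g g' : ℝ → ℝ} {K : NNReal}

lemma intervalIntegrable_of_ae_hasDerivAt (hg : LipschitzWith K g)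
    (hd : ∀ᵐ θ, HasDerivAt g (g' θ) θ) (a b : ℝ) : IntervalIntegrable g' volume a b :=
  (hg.lipschitzOnWith.absolutelyContinuousOnInterval.intervalIntegrable_deriv (a := a)
    (b := b)).congr_ae (ae_restrict_of_ae (hd.mono fun _ h => h.deriv))

lemma integral_eq_sub_of_ae_hasDerivAt (hg : LipschitzWith K g)
    (hd : ∀ᵐ θ, HasDerivAt g (g' θ) θ) (a b : ℝ) : ∫ θ in a..b, g' θ = g b - g a := by
  rw [← (hg.lipschitzOnWith (s := uIcc a b)).absolutelyContinuousOnInterval.integral_deriv_eq_sub]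
  exact intervalIntegral.integral_congr_ae (hd.mono fun _ h _ => h.deriv.symm)

lemma integral_mul_eq_half_of_pythagorean {T : ℝ} {C Sg c s : ℝ → ℝ} {KC KS : NNReal}
    (hC : LipschitzWith KC C) (hSg : LipschitzWith KS Sg)
    (hC_per : Function.Periodic C T) (hSg_per : Function.Periodic Sg T)
    (hd : ∀ᵐ θ, HasDerivAt C (-(s θ)) θ ∧ HasDerivAt Sg (c θ) θ ∧ c θ * C θ + s θ * Sg θ = 1) :
    ∫ θ in (0 : ℝ)..T, c θ * C θ = T / 2 := by
  have hcC : IntervalIntegrable (fun θ => c θ * C θ) volume 0 T :=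
    (hSg.intervalIntegrable_of_ae_hasDerivAt (hd.mono fun _ h => h.2.1) 0 T).mul_continuousOn
      hC.continuous.continuousOn
  have hparts := AbsolutelyContinuousOnInterval.integral_deriv_mul_eq_sub
    (hSg.lipschitzOnWith (s := uIcc 0 T)).absolutelyContinuousOnInterval
    (hC.lipschitzOnWith (s := uIcc 0 T)).absolutelyContinuousOnInterval
  have hzero : ∫ θ in (0 : ℝ)..T, (2 * (c θ * C θ) - 1) = 0 := by
    rw [show Sg T = Sg 0 by simpa using hSg_per 0, show C T = C 0 by simpa using hC_per 0,
      sub_self] at hparts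
    refine (intervalIntegral.integral_congr_ae ?_).trans hparts
    filter_upwards [hd] with θ ⟨hC', hSg', hpyth⟩ _
    rw [hC'.deriv, hSg'.deriv]
    linarith
  rw [intervalIntegral.integral_sub (hcC.const_mul 2) intervalIntegrable_const,
    intervalIntegral.integral_const_mul, intervalIntegral.integral_const] at hzero
  simp only [sub_zero, smul_eq_mul, mul_one] at hzero
  linarith

end LipschitzWith

theorem stmt8_general
    (S : ℝ) (hS : 0 < S)
    (C Sg c s : ℝ → ℝ)
    (hC_lip : ∃ K : NNReal, LipschitzWith K C)
    (hSg_lip : ∃ K : NNReal, LipschitzWith K Sg)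
    (hC_per : Function.Periodic C (2 * S))
    (hSg_per : Function.Periodic Sg (2 * S))
    (hconv : ∀ᵐ θ ∂(volume : Measure ℝ), HasDerivAt C (-(s θ)) θ ∧ HasDerivAt Sg (c θ) θ ∧
      c θ * C θ + s θ * Sg θ = 1)
    (M : ℝ)
    (F : ℝ → ℝ)
    (hF : ∀ l : ℝ, M < l → F l = ∫ θ in (0:ℝ)..(2*S), c θ / (l - C θ)) :
    ∀ k : ℕ, Tendsto (fun l : ℝ => l ^ (k + 2) * iteratedDeriv k F l) atTop
      (𝓝 ((-1 : ℝ) ^ k * ((k + 1).factorial : ℝ) * S)) := by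
  obtain ⟨KC, hKC⟩ := hC_lip
  obtain ⟨KS, hKS⟩ := hSg_lip
  obtain ⟨R, hR⟩ : ∃ R, ∀ θ, |C θ| ≤ R := by
    obtain ⟨R, hR⟩ := isBounded_iff_forall_norm_le.1
      (hC_per.isBounded_of_continuous (by positivity) hKC.continuous)
    exact ⟨R, fun θ => hR _ (mem_range_self θ)⟩
  have hc := hKS.intervalIntegrable_of_ae_hasDerivAt (hconv.mono fun _ h => h.2.1) 0 (2 * S)
  have hc0 : ∫ θ in (0 : ℝ)..2 * S, c θ = 0 := by
    rw [hKS.integral_eq_sub_of_ae_hasDerivAt (hconv.mono fun _ h => h.2.1),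
      show Sg (2 * S) = Sg 0 by simpa using hSg_per 0, sub_self]
  have hcC := LipschitzWith.integral_mul_eq_half_of_pythagorean hKC hKS hC_per hSg_per hconv
  have hCM : ∀ θ, C θ ≤ max M R :=
    fun θ => ((le_abs_self _).trans (hR θ)).trans (le_max_right _ _)
  have hF' : ∀ x, max M R < x → F x = ∫ θ in (0 : ℝ)..2 * S, c θ / (x - C θ) :=
    fun x hx => hF x ((le_max_left _ _).trans_lt hx)
  intro k
  have hlim := (tendsto_pow_mul_integral_div_sub_pow (by positivity) hc hc0 hKC.continuous hR k
    ).const_mul ((-1 : ℝ) ^ k * k.factorial)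
  rw [hcC, show (-1 : ℝ) ^ k * k.factorial * ((k + 1) * (2 * S / 2))
    = (-1) ^ k * (k + 1).factorial * S by push_cast [Nat.factorial_succ]; ring] at hlim
  refine hlim.congr' ?_
  filter_upwards [eventually_gt_atTop (max M R)] with x hx
  rw [iteratedDeriv_eq_integral_div_sub_pow hc hKC.continuous hCM hF' k hx]
  ring

theorem stmt8
    (S : ℝ) (hS : 0 < S)
    (C Sg c s : ℝ → ℝ)
    (hC_lip : ∃ K : NNReal, LipschitzWith K C)
    (hSg_lip : ∃ K : NNReal, LipschitzWith K Sg)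
    (hC_per : Function.Periodic C (2 * S))
    (hSg_per : Function.Periodic Sg (2 * S))
    (hc_meas : Measurable c) (hs_meas : Measurable s)
    (hc_bdd : ∃ B : ℝ, ∀ θ, |c θ| ≤ B) (hs_bdd : ∃ B : ℝ, ∀ θ, |s θ| ≤ B)
    (hconv : ∀ᵐ θ ∂(volume : Measure ℝ), HasDerivAt C (-(s θ)) θ ∧ HasDerivAt Sg (c θ) θ ∧
      c θ * C θ + s θ * Sg θ = 1)
    (M : ℝ) (hM : IsGreatest (C '' Set.Icc 0 (2 * S)) M)
    (L F : ℝ → ℝ)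
    (hL : ∀ l : ℝ, M < l → L l = ∫ θ in (0:ℝ)..(2*S), 1 / (l - C θ))
    (hF : ∀ l : ℝ, M < l → F l = ∫ θ in (0:ℝ)..(2*S), c θ / (l - C θ)) :
    ∀ k : ℕ, Tendsto (fun l : ℝ => l ^ (k + 2) * iteratedDeriv k F l) atTop
      (𝓝 ((-1 : ℝ) ^ k * ((k + 1).factorial : ℝ) * S)) :=
  stmt8_general S hS C Sg c s hC_lip hSg_lip hC_per hSg_per hconv M F hF
end

section
/- Assume M > 0. Then for every λ > M the improper integrals below converge and F(λ) = −∫_λ^{+∞} L′(μ)/μ dμ = L(λ)/λ − ∫_λ^{+∞} L(μ)/μ² dμ. -/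
/-!
Differentiating under the integral sign, `L' λ = -∫ (λ - C)⁻²` and `F' λ = -∫ c (λ - C)⁻²`.
Integrating `Σ · (λ - C)⁻¹` by parts over a period, and using `c C + s Σ = 1`, gives
`λ ∫ c (λ - C)⁻² = ∫ (λ - C)⁻²`, that is `F' = L' / λ`. As `L' ≤ 0 ≤ L` and both `F` and `L / λ`
vanish at infinity, the two identities are the fundamental theorem of calculus on `(λ, ∞)` for `F`
and for `L / λ`, whose derivative is `L' / λ - L / λ²`.
-/

open MeasureTheory Filter Set Topology Metric

lemma Function.Periodic.le_of_isGreatest_image_Icc {α : Type*} [Preorder α] {f : ℝ → α}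
    {T : ℝ} {M : α} (hf : Function.Periodic f T) (hT : 0 < T) (hM : IsGreatest (f '' Icc 0 T) M)
    (x : ℝ) : f x ≤ M := by
  obtain ⟨y, hy, hfy⟩ := hf.exists_mem_Ico₀ hT x
  exact hfy ▸ hM.2 ⟨y, Ico_subset_Icc_self hy, rfl⟩

lemma abs_div_le_div_of_le {a b B δ : ℝ} (hδ : 0 < δ) (ha : |a| ≤ B) (hb : δ ≤ b) :
    |a / b| ≤ B / δ := by
  rw [abs_div, abs_of_pos (hδ.trans_le hb)]
  exact div_le_div₀ ((abs_nonneg a).trans ha) ha hδ hb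

lemma intervalIntegrable_div_of_le {f g : ℝ → ℝ} {a b B δ : ℝ} (hf : Measurable f)
    (hg : Measurable g) (hδ : 0 < δ) (hfB : ∀ θ, |f θ| ≤ B) (hgδ : ∀ θ, δ ≤ g θ) :
    IntervalIntegrable (fun θ => f θ / g θ) volume a b :=
  (intervalIntegrable_const (c := B / δ)).mono_fun' (hf.div hg).aestronglyMeasurable
    (Eventually.of_forall fun θ => abs_div_le_div_of_le hδ (hfB θ) (hgδ θ))

section ResolventIntegral

variable {T M B x : ℝ} {C ρ : ℝ → ℝ}

lemma tendsto_integral_div_sub_atTop (hρB : ∀ θ, |ρ θ| ≤ B) (hCM : ∀ θ, C θ ≤ M) :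
    Tendsto (fun y => ∫ θ in 0..T, ρ θ / (y - C θ)) atTop (𝓝 0) := by
  have hbound : ∀ᶠ y in atTop, ‖∫ θ in 0..T, ρ θ / (y - C θ)‖ ≤ B * |T| * (y - M)⁻¹ := by
    filter_upwards [eventually_gt_atTop M] with y hy
    have := intervalIntegral.norm_integral_le_of_norm_le_const (a := 0) (b := T)
      (f := fun θ => ρ θ / (y - C θ))
      fun θ _ => abs_div_le_div_of_le (b := y - C θ) (sub_pos.2 hy) (hρB θ) (by linarith [hCM θ])
    simpa [div_eq_mul_inv, mul_right_comm] using this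
  have hinv : Tendsto (fun y => (y - M)⁻¹) atTop (𝓝 0) :=
    tendsto_inv_atTop_zero.comp (tendsto_atTop_add_const_right _ _ tendsto_id)
  exact squeeze_zero_norm' hbound (by simpa using hinv.const_mul (B * |T|))

lemma hasDerivAt_integral_div_sub (hC : Measurable C) (hρ : Measurable ρ)
    (hρB : ∀ θ, |ρ θ| ≤ B) (hCM : ∀ θ, C θ ≤ M) (hx : M < x) :
    HasDerivAt (fun y => ∫ θ in 0..T, ρ θ / (y - C θ))
      (-∫ θ in 0..T, ρ θ / (x - C θ) ^ 2) x := by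
  set ε := (x - M) / 2
  have hε : 0 < ε := by simp only [ε]; linarith
  have hball : ∀ y ∈ ball x ε, ∀ θ, ε ≤ y - C θ := fun y hy θ => by
    have := (abs_lt.1 (mem_ball_iff_norm.1 hy)).1
    simp only [ε] at this ⊢
    linarith [hCM θ]
  have key := intervalIntegral.hasDerivAt_integral_of_dominated_loc_of_deriv_le
    (F := fun y θ => ρ θ / (y - C θ)) (F' := fun y θ => -(ρ θ / (y - C θ) ^ 2))
    (a := 0) (b := T) (bound := fun _ => B / ε ^ 2) (ball_mem_nhds x hε)
    (Eventually.of_forall fun y => (by fun_prop : Measurable _).aestronglyMeasurable)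
    (intervalIntegrable_div_of_le hρ (by fun_prop) hε hρB (hball x (mem_ball_self hε)))
    (by fun_prop : Measurable _).aestronglyMeasurable
    (Eventually.of_forall fun θ _ y hy => by
      rw [Real.norm_eq_abs, abs_neg]
      exact abs_div_le_div_of_le (by positivity) (hρB θ)
        (pow_le_pow_left₀ hε.le (hball y hy θ) 2))
    intervalIntegrable_const
    (Eventually.of_forall fun θ _ y hy => by
      have hne : y - C θ ≠ 0 := (hε.trans_le (hball y hy θ)).ne'
      exact ((hasDerivAt_const y (ρ θ)).fun_div ((hasDerivAt_id' y).sub_const (C θ))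
        hne).congr_deriv (by ring))
  simpa only [intervalIntegral.integral_neg] using key.2

end ResolventIntegral

lemma lipschitzOnWith_inv_sub {x δ : ℝ} (hδ : 0 < δ) :
    LipschitzOnWith (Real.toNNReal (δ ^ 2)⁻¹) (fun y => (x - y)⁻¹) (Iic (x - δ)) := by
  refine LipschitzOnWith.of_dist_le' fun a ha b hb => ?_
  have ha' : δ ≤ x - a := by linarith [mem_Iic.1 ha]
  have hb' : δ ≤ x - b := by linarith [mem_Iic.1 hb]
  rw [Real.dist_eq, Real.dist_eq, inv_sub_inv (by linarith) (by linarith), ← div_eq_inv_mul,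
    sub_sub_sub_cancel_left]
  exact abs_div_le_div_of_le (by positivity) le_rfl (by nlinarith)

theorem integral_mul_sub_one_div_sub_sq_eq_zero {T M x : ℝ} {C Sg c s : ℝ → ℝ} {KC KS : NNReal}
    (hC : LipschitzWith KC C) (hSg : LipschitzWith KS Sg)
    (hC_per : Function.Periodic C T) (hSg_per : Function.Periodic Sg T)
    (hconv : ∀ᵐ θ ∂(volume : Measure ℝ), HasDerivAt C (-(s θ)) θ ∧ HasDerivAt Sg (c θ) θ ∧
      c θ * C θ + s θ * Sg θ = 1)
    (hCM : ∀ θ, C θ ≤ M) (hx : M < x) :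
    ∫ θ in 0..T, (x * c θ - 1) / (x - C θ) ^ 2 = 0 := by
  have hpos : ∀ θ, 0 < x - C θ := fun θ => by linarith [hCM θ]
  have hSg_ac : AbsolutelyContinuousOnInterval Sg 0 T :=
    hSg.lipschitzOnWith.absolutelyContinuousOnInterval
  have hinv_ac : AbsolutelyContinuousOnInterval (fun θ => (x - C θ)⁻¹) 0 T :=
    ((lipschitzOnWith_inv_sub (sub_pos.2 hx)).comp hC.lipschitzOnWith
      fun θ _ => by simpa using hCM θ).absolutelyContinuousOnInterval
  have hparts := hSg_ac.integral_deriv_mul_eq_sub hinv_ac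
  rw [hSg_per.eq, hC_per.eq, sub_self] at hparts
  refine (intervalIntegral.integral_congr_ae ?_).trans hparts
  filter_upwards [hconv] with θ ⟨hCθ, hSgθ, hpyth⟩ _
  rw [hSgθ.deriv, ((hCθ.const_sub x).fun_inv (hpos θ).ne').deriv]
  field_simp [(hpos θ).ne']
  linear_combination hpyth

theorem mul_integral_div_sub_sq_eq {T M B x : ℝ} {C Sg c s : ℝ → ℝ} {KC KS : NNReal}
    (hC : LipschitzWith KC C) (hSg : LipschitzWith KS Sg)
    (hC_per : Function.Periodic C T) (hSg_per : Function.Periodic Sg T)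
    (hc : Measurable c) (hcB : ∀ θ, |c θ| ≤ B)
    (hconv : ∀ᵐ θ ∂(volume : Measure ℝ), HasDerivAt C (-(s θ)) θ ∧ HasDerivAt Sg (c θ) θ ∧
      c θ * C θ + s θ * Sg θ = 1)
    (hCM : ∀ θ, C θ ≤ M) (hx : M < x) :
    x * ∫ θ in 0..T, c θ / (x - C θ) ^ 2 = ∫ θ in 0..T, 1 / (x - C θ) ^ 2 := by
  have hCm : Measurable C := hC.continuous.measurable
  have hsq : ∀ θ, (x - M) ^ 2 ≤ (x - C θ) ^ 2 := fun θ =>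
    pow_le_pow_left₀ (sub_pos.2 hx).le (by linarith [hCM θ]) 2
  have hδ : 0 < (x - M) ^ 2 := by nlinarith
  have hc_int := intervalIntegrable_div_of_le (a := 0) (b := T) hc (by fun_prop) hδ hcB hsq
  have hone_int := intervalIntegrable_div_of_le (a := 0) (b := T) (f := fun _ => 1)
    measurable_const (by fun_prop) hδ (fun _ => abs_one.le) hsq
  rw [← sub_eq_zero, ← intervalIntegral.integral_const_mul,
    ← intervalIntegral.integral_sub (hc_int.const_mul x) hone_int]
  refine (intervalIntegral.integral_congr fun θ _ => ?_).trans
    (integral_mul_sub_one_div_sub_sq_eq_zero hC hSg hC_per hSg_per hconv hCM hx)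
  ring

lemma integrableOn_and_integral_Ioi_div_eq {L F L' : ℝ → ℝ} {M l : ℝ} (hM : 0 ≤ M) (hl : M < l)
    (hL : ∀ μ, M < μ → HasDerivAt L (L' μ) μ) (hF : ∀ μ, M < μ → HasDerivAt F (L' μ / μ) μ)
    (hL'_nonpos : ∀ μ, M < μ → L' μ ≤ 0) (hL_nonneg : ∀ μ, M < μ → 0 ≤ L μ)
    (hL_lim : Tendsto L atTop (𝓝 0)) (hF_lim : Tendsto F atTop (𝓝 0)) :
    IntegrableOn (fun μ => L' μ / μ) (Ioi l) ∧ IntegrableOn (fun μ => L μ / μ ^ 2) (Ioi l) ∧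
      F l = -∫ μ in Ioi l, L' μ / μ ∧ F l = L l / l - ∫ μ in Ioi l, L μ / μ ^ 2 := by
  have hM_lt : ∀ μ ∈ Ici l, M < μ := fun μ hμ => hl.trans_le hμ
  have hpos : ∀ μ ∈ Ici l, 0 < μ := fun μ hμ => hM.trans_lt (hM_lt μ hμ)
  have hF' : ∀ μ ∈ Ici l, HasDerivAt F (L' μ / μ) μ := fun μ hμ => hF μ (hM_lt μ hμ)
  have hG' : ∀ μ ∈ Ici l, HasDerivAt (fun μ => L μ / μ) (L' μ / μ - L μ / μ ^ 2) μ :=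
    fun μ hμ => ((hL μ (hM_lt μ hμ)).div (hasDerivAt_id' μ) (hpos μ hμ).ne').congr_deriv
      (by field_simp [(hpos μ hμ).ne'])
  have hF'_nonpos : ∀ μ ∈ Ioi l, L' μ / μ ≤ 0 := fun μ hμ =>
    div_nonpos_of_nonpos_of_nonneg (hL'_nonpos μ (hl.trans hμ)) (hpos μ (Ioi_subset_Ici_self hμ)).le
  have hG'_nonpos : ∀ μ ∈ Ioi l, L' μ / μ - L μ / μ ^ 2 ≤ 0 := fun μ hμ =>
    sub_nonpos.2 ((hF'_nonpos μ hμ).trans (by have := hL_nonneg μ (hl.trans hμ); positivity))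
  have hG_lim : Tendsto (fun μ => L μ / μ) atTop (𝓝 0) := by
    simpa [div_eq_mul_inv] using hL_lim.mul tendsto_inv_atTop_zero
  have hint1 := integrableOn_Ioi_deriv_of_nonpos' hF' hF'_nonpos hF_lim
  have hint2 := integrableOn_Ioi_deriv_of_nonpos' hG' hG'_nonpos hG_lim
  have hint3 : IntegrableOn (fun μ => L μ / μ ^ 2) (Ioi l) :=
    (hint1.sub hint2).congr_fun (fun μ _ => by simp) measurableSet_Ioi
  have heq1 := integral_Ioi_of_hasDerivAt_of_nonpos' hF' hF'_nonpos hF_lim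
  have heq2 := integral_Ioi_of_hasDerivAt_of_nonpos' hG' hG'_nonpos hG_lim
  rw [integral_sub hint1 hint3] at heq2
  exact ⟨hint1, hint3, by linarith, by linarith⟩

theorem stmt9_general
    (S : ℝ) (hS : 0 < S)
    (C Sg c s : ℝ → ℝ)
    (hC_lip : ∃ K : NNReal, LipschitzWith K C)
    (hSg_lip : ∃ K : NNReal, LipschitzWith K Sg)
    (hC_per : Function.Periodic C (2 * S))
    (hSg_per : Function.Periodic Sg (2 * S))
    (hc_meas : Measurable c)
    (hc_bdd : ∃ B : ℝ, ∀ θ, |c θ| ≤ B)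
    (hconv : ∀ᵐ θ ∂(volume : Measure ℝ), HasDerivAt C (-(s θ)) θ ∧ HasDerivAt Sg (c θ) θ ∧
      c θ * C θ + s θ * Sg θ = 1)
    (M : ℝ) (hM : IsGreatest (C '' Set.Icc 0 (2 * S)) M)
    (L F : ℝ → ℝ)
    (hL : ∀ l : ℝ, M < l → L l = ∫ θ in (0:ℝ)..(2*S), 1 / (l - C θ))
    (hF : ∀ l : ℝ, M < l → F l = ∫ θ in (0:ℝ)..(2*S), c θ / (l - C θ))
    (hM0 : 0 < M) :
    ∀ l : ℝ, M < l →
      IntegrableOn (fun μ : ℝ => deriv L μ / μ) (Set.Ioi l) volume ∧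
      IntegrableOn (fun μ : ℝ => L μ / μ ^ 2) (Set.Ioi l) volume ∧
      F l = -∫ μ in Set.Ioi l, deriv L μ / μ ∧
      F l = L l / l - ∫ μ in Set.Ioi l, L μ / μ ^ 2 := by
  intro l hl
  obtain ⟨KC, hKC⟩ := hC_lip
  obtain ⟨KS, hKS⟩ := hSg_lip
  obtain ⟨B, hcB⟩ := hc_bdd
  have hCM := hC_per.le_of_isGreatest_image_Icc (by positivity) hM
  have hCm : Measurable C := hKC.continuous.measurable
  have hone : ∀ θ : ℝ, |(1 : ℝ)| ≤ 1 := fun _ => abs_one.le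
  have hLd : ∀ μ, M < μ → HasDerivAt L (-∫ θ in (0:ℝ)..2 * S, 1 / (μ - C θ) ^ 2) μ :=
    fun μ hμ => (hasDerivAt_integral_div_sub hCm measurable_const hone hCM hμ).congr_of_eventuallyEq
      (eventually_of_mem (Ioi_mem_nhds hμ) hL)
  refine integrableOn_and_integral_Ioi_div_eq hM0.le hl
    (fun μ hμ => (hLd μ hμ).differentiableAt.hasDerivAt) (fun μ hμ => ?_) (fun μ hμ => ?_)
    (fun μ hμ => ?_) ?_ ?_
  · rw [(hLd μ hμ).deriv, ← mul_integral_div_sub_sq_eq hKC hKS hC_per hSg_per hc_meas hcB hconv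
      hCM hμ, neg_div, mul_div_cancel_left₀ _ (hM0.trans hμ).ne']
    exact (hasDerivAt_integral_div_sub hCm hc_meas hcB hCM hμ).congr_of_eventuallyEq
      (eventually_of_mem (Ioi_mem_nhds hμ) hF)
  · rw [(hLd μ hμ).deriv, neg_nonpos]
    exact intervalIntegral.integral_nonneg (by positivity) fun θ _ => by positivity
  · rw [hL μ hμ]
    exact intervalIntegral.integral_nonneg (by positivity) fun θ _ =>
      (one_div_pos.2 (by linarith [hCM θ])).le
  · exact (tendsto_integral_div_sub_atTop hone hCM).congr'
      ((eventually_gt_atTop M).mono fun μ hμ => (hL μ hμ).symm)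
  · exact (tendsto_integral_div_sub_atTop hcB hCM).congr'
      ((eventually_gt_atTop M).mono fun μ hμ => (hF μ hμ).symm)

theorem stmt9
    (S : ℝ) (hS : 0 < S)
    (C Sg c s : ℝ → ℝ)
    (hC_lip : ∃ K : NNReal, LipschitzWith K C)
    (hSg_lip : ∃ K : NNReal, LipschitzWith K Sg)
    (hC_per : Function.Periodic C (2 * S))
    (hSg_per : Function.Periodic Sg (2 * S))
    (hc_meas : Measurable c) (hs_meas : Measurable s)
    (hc_bdd : ∃ B : ℝ, ∀ θ, |c θ| ≤ B) (hs_bdd : ∃ B : ℝ, ∀ θ, |s θ| ≤ B)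
    (hconv : ∀ᵐ θ ∂(volume : Measure ℝ), HasDerivAt C (-(s θ)) θ ∧ HasDerivAt Sg (c θ) θ ∧
      c θ * C θ + s θ * Sg θ = 1)
    (M : ℝ) (hM : IsGreatest (C '' Set.Icc 0 (2 * S)) M)
    (L F : ℝ → ℝ)
    (hL : ∀ l : ℝ, M < l → L l = ∫ θ in (0:ℝ)..(2*S), 1 / (l - C θ))
    (hF : ∀ l : ℝ, M < l → F l = ∫ θ in (0:ℝ)..(2*S), c θ / (l - C θ))
    (hM0 : 0 < M) :
    ∀ l : ℝ, M < l →
      IntegrableOn (fun μ : ℝ => deriv L μ / μ) (Set.Ioi l) volume ∧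
      IntegrableOn (fun μ : ℝ => L μ / μ ^ 2) (Set.Ioi l) volume ∧
      F l = -∫ μ in Set.Ioi l, deriv L μ / μ ∧
      F l = L l / l - ∫ μ in Set.Ioi l, L μ / μ ^ 2 :=
  stmt9_general S hS C Sg c s hC_lip hSg_lip hC_per hSg_per hc_meas hc_bdd hconv M hM L F hL hF hM0
end
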